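/- arXiv:2312.08421 — 7 statements merged into one kernel-verified Lean document; each statement's English description precedes it below -/
import Mathlib

section
/- Let K be a field of characteristic zero and B a commutative K-algebra that is an integral domain. If the ideal of B generated by the union of the images D(B) over all LNDs D of B is the whole ring B, then HD*(B[u]) = B[u]. -/
/-- A K-derivation is locally nilpotent (an LND) if for every element `a`
there exists `n ≥ 1` with `D^[n] a = 0`. -/
def IsLND {K A : Type*} [CommRing K] [CommRing A] [Algebra K A]
    (D : Derivation K A A) : Prop :=
  ∀ a : A, ∃ n : ℕ, 1 ≤ n ∧ (⇑D)^[n] a = 0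

/-- The modified Derksen invariant `HD*(A)`: the K-subalgebra of `A` generated by
the union of the kernels of all LNDs of `A` that possess a slice. -/
def HDStar (K A : Type*) [CommRing K] [CommRing A] [Algebra K A] : Subalgebra K A :=
  Algebra.adjoin K {a : A | ∃ D : Derivation K A A, IsLND D ∧ (∃ s : A, D s = 1) ∧ D a = 0}

open Polynomial
section Helpers
set_option linter.unusedSectionVars false
variable {K B : Type*} [Field K] [CharZero K] [CommRing B] [Algebra K B]

noncomputable def polyDeriv : Derivation K B[X] B[X] :=
  (Polynomial.derivative' (R := B)).restrictScalars K

noncomputable def polyD (D : Derivation K B B) : Derivation K B[X] B[X] :=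
  PolynomialModule.equivPolynomialSelf.compDer D.mapCoeffs

lemma polyDeriv_apply (f : B[X]) : polyDeriv (K := K) f = derivative f := rfl
lemma coeff_polyD (D : Derivation K B B) (f : B[X]) (i : ℕ) :
    (polyD D f).coeff i = D (f.coeff i) := rfl

lemma polyD_commute (D : Derivation K B B) :
    Commute (polyD D).toLinearMap (polyDeriv (K := K) (B := B)).toLinearMap := by
  refine LinearMap.ext fun f => ?_
  ext i
  simp only [Module.End.mul_apply, Derivation.coeFn_coe, coeff_polyD, polyDeriv_apply,
    coeff_derivative, coeff_polyD]
  rw [Derivation.leibniz]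
  simp
  ring

lemma iter_stable {A : Type*} [CommRing A] [Algebra K A] (D : Derivation K A A) {a : A} {n : ℕ}
    (h : (⇑D)^[n] a = 0) {m : ℕ} (hm : n ≤ m) : (⇑D)^[m] a = 0 := by
  obtain ⟨k, rfl⟩ := Nat.exists_eq_add_of_le hm
  rw [Nat.add_comm, Function.iterate_add_apply, h]
  exact Function.iterate_fixed D.map_zero k

lemma coeff_polyD_iter (D : Derivation K B B) (f : B[X]) (k i : ℕ) :
    ((⇑(polyD D))^[k] f).coeff i = (⇑D)^[k] (f.coeff i) := by
  induction k generalizing f with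
  | zero => rfl
  | succ k ih => rw [Function.iterate_succ_apply, Function.iterate_succ_apply, ih, coeff_polyD]

lemma polyD_nilpotent (D : Derivation K B B) (hD : IsLND D) (f : B[X]) :
    ∃ k : ℕ, 1 ≤ k ∧ (⇑(polyD D))^[k] f = 0 := by
  choose g hg1 hg2 using hD
  refine ⟨(f.support.sup fun i => g (f.coeff i)) + 1, le_add_self, ?_⟩
  ext i
  rw [coeff_polyD_iter, coeff_zero]
  by_cases hi : i ∈ f.support
  · exact iter_stable D (hg2 (f.coeff i))
      (le_trans (Finset.le_sup (f := fun i => g (f.coeff i)) hi) (Nat.le_succ _))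
  · rw [Polynomial.notMem_support_iff.mp hi]
    exact iter_stable D (n := 1) (by simpa using D.map_zero) (by omega)

lemma polyDeriv_coe : ⇑(polyDeriv (K := K) (B := B)) = ⇑(derivative (R := B)) := rfl

lemma Et_isLND (D : Derivation K B B) (hD : IsLND D) (t : K) :
    IsLND (polyDeriv - t • polyD D) := by
  intro f
  obtain ⟨k, hk1, hk⟩ := polyD_nilpotent D hD f
  set m := f.natDegree + 1 with hm
  refine ⟨m + k, by omega, ?_⟩
  set P := (polyDeriv (K := K) (B := B)).toLinearMap with hP
  set Q := (polyD D).toLinearMap with hQ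
  set E := polyDeriv (K := K) (B := B) - t • polyD D with hE
  have hcoe : ∀ g, E g = (P + (-(t • Q))) g := by
    intro g
    rw [Derivation.sub_apply, Derivation.smul_apply, LinearMap.add_apply, LinearMap.neg_apply,
      LinearMap.smul_apply, sub_eq_add_neg]
    rfl
  have hcoe' : ⇑E = ⇑(P + (-(t • Q))) := funext hcoe
  have hc : Commute P (-(t • Q)) := (((polyD_commute D).smul_left t).neg_left).symm
  have hPzero : ∀ j, m ≤ j → (P ^ j) f = 0 := by
    intro j hj
    rw [Module.End.pow_apply]
    show (⇑(polyDeriv (K := K) (B := B)))^[j] f = 0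
    refine iter_stable polyDeriv (n := m) ?_ hj
    rw [polyDeriv_coe]
    exact Polynomial.iterate_derivative_eq_zero (by omega)
  have hQzero : ∀ j, k ≤ j → ((-(t • Q)) ^ j) f = 0 := by
    intro j hj
    rw [show -(t • Q) = (-t) • Q from (neg_smul t Q).symm, _root_.smul_pow,
      LinearMap.smul_apply, Module.End.pow_apply]
    have : (⇑(polyD D))^[j] f = 0 := iter_stable (polyD D) hk hj
    rw [show (⇑Q)^[j] f = (⇑(polyD D))^[j] f from rfl, this, smul_zero]
  rw [hcoe', ← Module.End.pow_apply, hc.add_pow, LinearMap.sum_apply]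
  refine Finset.sum_eq_zero fun i hi => ?_
  rw [Module.End.mul_apply, Module.End.mul_apply]
  have hcast : (↑((m + k).choose i) : Module.End K B[X]) f = ((m + k).choose i : ℕ) • f :=
    Module.End.natCast_apply _ _
  rw [hcast, map_nsmul, map_nsmul]
  by_cases hik : k ≤ m + k - i
  · rw [hQzero _ hik, map_zero, smul_zero]
  · have him : m ≤ i := by
      have : i < m + k + 1 := Finset.mem_range.mp hi
      omega
    rw [← Module.End.mul_apply, (hc.pow_pow i (m + k - i)).eq, Module.End.mul_apply,
      hPzero _ him, map_zero, smul_zero]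

lemma polyD_C_mul_X_pow (D : Derivation K B B) (a : B) (n : ℕ) :
    polyD D (C a * X ^ n) = C (D a) * X ^ n := by
  ext i
  rw [coeff_polyD, coeff_C_mul_X_pow, coeff_C_mul_X_pow]
  split <;> simp

lemma polyD_X (D : Derivation K B B) : polyD D X = 0 := by
  have : (X : B[X]) = C 1 * X ^ 1 := by simp
  rw [this, polyD_C_mul_X_pow]
  simp

noncomputable def Et (D : Derivation K B B) (t : K) : Derivation K B[X] B[X] :=
  polyDeriv - t • polyD D

lemma Et_isLND' (D : Derivation K B B) (hD : IsLND D) (t : K) : IsLND (Et D t) :=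
  Et_isLND D hD t

lemma Et_slice (D : Derivation K B B) (t : K) : Et D t X = 1 := by
  rw [Et]
  rw [Derivation.sub_apply, Derivation.smul_apply, polyD_X, smul_zero, sub_zero,
    polyDeriv_apply, derivative_X]

lemma Et_kernel (D : Derivation K B B) (s : B) (t : K) {M : ℕ}
    (hN : ∀ n, M + 1 ≤ n → (⇑D)^[n] s = 0) :
    Et D t
      (∑ n ∈ Finset.range (M + 1),
        (t ^ n * ((n.factorial : K))⁻¹) • (C ((⇑D)^[n] s) * X ^ n)) = 0 := by
  rw [Et, Derivation.sub_apply, Derivation.smul_apply]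
  rw [map_sum, map_sum]
  have h1 : ∀ n ∈ Finset.range (M + 1),
      polyDeriv (K := K) ((t ^ n * ((n.factorial : K))⁻¹) • (C ((⇑D)^[n] s) * X ^ n)) =
      (t ^ n * ((n.factorial : K))⁻¹) • (C ((⇑D)^[n] s * n) * X ^ (n - 1)) := by
    intro n _
    rw [Derivation.map_smul, polyDeriv_apply, derivative_C_mul_X_pow]
  have h2 : ∀ n ∈ Finset.range (M + 1),
      polyD D ((t ^ n * ((n.factorial : K))⁻¹) • (C ((⇑D)^[n] s) * X ^ n)) =
      (t ^ n * ((n.factorial : K))⁻¹) • (C ((⇑D)^[n+1] s) * X ^ n) := by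
    intro n _
    rw [Derivation.map_smul, polyD_C_mul_X_pow, Function.iterate_succ_apply']
  rw [Finset.sum_congr rfl h1, Finset.sum_congr rfl h2]
  rw [Finset.sum_range_succ' (fun n => (t ^ n * ((n.factorial : K))⁻¹) •
    (C ((⇑D)^[n] s * n) * X ^ (n - 1)))]
  rw [Finset.smul_sum, Finset.sum_range_succ]
  rw [hN (M + 1) le_rfl]
  simp only [Nat.cast_zero, mul_zero, map_zero, zero_mul, smul_zero, add_zero, C_0]
  rw [sub_eq_zero]
  refine Finset.sum_congr rfl fun i _ => ?_
  have hfac : ((i + 1).factorial : K) = ((i + 1 : ℕ) : K) * (i.factorial : K) := by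
    rw [Nat.factorial_succ]; push_cast; ring
  have hC : C ((⇑D)^[i+1] s * (((i : ℕ) + 1 : ℕ) : B)) * X ^ (i + 1 - 1)
      = (((i + 1 : ℕ) : K)) • (C ((⇑D)^[i+1] s) * X ^ i) := by
    have h1 : (((i : ℕ) + 1 : ℕ) : B) = algebraMap K B (((i + 1 : ℕ)) : K) := by
      simp
    rw [h1, mul_comm ((⇑D)^[i+1] s) _, ← Algebra.smul_def, ← Polynomial.smul_C, smul_mul_assoc]
    norm_num
  rw [hC, smul_smul, smul_smul]
  congr 1
  have hf1 : ((i.factorial : K)) ≠ 0 := Nat.cast_ne_zero.mpr (Nat.factorial_ne_zero i)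
  have hf2 : (((i+1).factorial : K)) ≠ 0 := Nat.cast_ne_zero.mpr (Nat.factorial_ne_zero (i+1))
  have hi1 : ((i + 1 : ℕ) : K) ≠ 0 := Nat.cast_ne_zero.mpr i.succ_ne_zero
  rw [pow_succ, hfac, mul_inv]
  field_simp

lemma vandermonde_extract {M : Type*} [AddCommGroup M] [Module K M] (S : Submodule K M)
    {N : ℕ} (v : Fin N → M)
    (h : ∀ t : K, (∑ n : Fin N, t ^ (n : ℕ) • v n) ∈ S) (n : Fin N) : v n ∈ S := by
  classical
  set V : Matrix (Fin N) (Fin N) K := Matrix.vandermonde (fun j => ((j : ℕ) : K)) with hV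
  have hdet : V.det ≠ 0 := by
    rw [hV, Matrix.det_vandermonde_ne_zero_iff]
    intro a b hab
    exact Fin.ext (Nat.cast_injective hab)
  set W := V⁻¹ with hW
  have hWV : W * V = 1 := Matrix.nonsing_inv_mul V (isUnit_iff_ne_zero.mpr hdet)
  have key : v n = ∑ j : Fin N, W n j • (∑ m : Fin N, V j m • v m) := by
    have e1 : ∀ j : Fin N, W n j • (∑ m : Fin N, V j m • v m)
        = ∑ m : Fin N, (W n j * V j m) • v m := by
      intro j
      rw [Finset.smul_sum]
      exact Finset.sum_congr rfl fun m _ => by rw [smul_smul]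
    rw [Finset.sum_congr rfl fun j _ => e1 j, Finset.sum_comm]
    have e2 : ∀ m : Fin N, (∑ j : Fin N, (W n j * V j m) • v m)
        = ((W * V) n m) • v m := by
      intro m
      rw [Matrix.mul_apply, ← Finset.sum_smul]
    rw [Finset.sum_congr rfl fun m _ => e2 m, hWV]
    simp [Matrix.one_apply]
  rw [key]
  refine Submodule.sum_mem S fun j _ => Submodule.smul_mem S _ ?_
  have := h ((j : ℕ) : K)
  simpa [hV, Matrix.vandermonde] using this

end Helpers

theorem stmt3 {K B : Type*} [Field K] [CharZero K]
    [CommRing B] [IsDomain B] [Algebra K B]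
    (hI : Ideal.span {b : B | ∃ D : Derivation K B B, IsLND D ∧ b ∈ Set.range D} = ⊤) :
    HDStar K (Polynomial B) = ⊤ := by
  classical
  have hderivLND : IsLND (polyDeriv (K := K) (B := B)) := by
    intro f
    exact ⟨f.natDegree + 1, by omega, by
      rw [polyDeriv_coe]; exact Polynomial.iterate_derivative_eq_zero (by omega)⟩
  have hCmem : ∀ b : B, (C b : B[X]) ∈ HDStar K (Polynomial B) := fun b =>
    Algebra.subset_adjoin ⟨polyDeriv, hderivLND,
      ⟨X, by rw [polyDeriv_apply, derivative_X]⟩, by rw [polyDeriv_apply, derivative_C]⟩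
  have hkey : ∀ (D : Derivation K B B), IsLND D → ∀ s : B,
      (C (D s) * X : B[X]) ∈ HDStar K (Polynomial B) := by
    intro D hD s
    obtain ⟨n₀, hn₀1, hn₀⟩ := hD s
    set M := n₀ + 1 with hM
    have hvan : ∀ n, M + 1 ≤ n → (⇑D)^[n] s = 0 := fun n hn => iter_stable D hn₀ (by omega)
    set g : ℕ → B[X] :=
      fun k => (((k.factorial : K))⁻¹) • (C ((⇑D)^[k] s) * X ^ k) with hg
    set v : Fin (M + 1) → B[X] := fun n => g (n : ℕ) with hv
    have hsum : ∀ t : K,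
        (∑ n : Fin (M + 1), t ^ (n : ℕ) • v n) ∈ Subalgebra.toSubmodule (HDStar K (Polynomial B)) := by
      intro t
      have he : (∑ n : Fin (M + 1), t ^ (n : ℕ) • v n) =
          ∑ n ∈ Finset.range (M + 1),
            (t ^ n * ((n.factorial : K))⁻¹) • (C ((⇑D)^[n] s) * X ^ n) := by
        rw [show (fun n : Fin (M+1) => t ^ (n : ℕ) • v n) = fun n : Fin (M+1) =>
          (fun k => t ^ k • g k) (n : ℕ) from rfl, Fin.sum_univ_eq_sum_range (fun k => t ^ k • g k)]
        refine Finset.sum_congr rfl fun k _ => ?_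
        rw [hg, smul_smul]
      rw [he]
      simp only [Subalgebra.mem_toSubmodule]
      exact Algebra.subset_adjoin ⟨Et D t, Et_isLND' D hD t, ⟨X, Et_slice D t⟩,
        Et_kernel D s t hvan⟩
    have h1 := vandermonde_extract _ v hsum ⟨1, by omega⟩
    rw [Subalgebra.mem_toSubmodule] at h1
    have hv1 : v ⟨1, by omega⟩ = C (D s) * X := by
      rw [hv]
      simp [hg]
    rw [hv1] at h1
    exact h1
  have hX : (X : B[X]) ∈ HDStar K (Polynomial B) := by
    let T : Ideal B :=
      { carrier := {b : B | (C b * X : B[X]) ∈ HDStar K (Polynomial B)},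
        add_mem' := fun {a b} ha hb => by
          show (C (a + b) * X : B[X]) ∈ HDStar K (Polynomial B)
          rw [map_add, add_mul]
          exact add_mem ha hb
        zero_mem' := by
          show (C (0:B) * X : B[X]) ∈ HDStar K (Polynomial B)
          rw [map_zero, zero_mul]
          exact zero_mem _
        smul_mem' := fun c b hb => by
          show (C (c * b) * X : B[X]) ∈ HDStar K (Polynomial B)
          rw [map_mul, mul_assoc]
          exact mul_mem (hCmem c) hb }
    have hT : (1 : B) ∈ T := by
      have hle : Ideal.span {b : B | ∃ D : Derivation K B B, IsLND D ∧ b ∈ Set.range D} ≤ T :=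
        Ideal.span_le.mpr (fun b hb => by
          obtain ⟨D, hD, s, rfl⟩ := hb
          exact hkey D hD s)
      rw [hI] at hle
      exact hle trivial
    have : (C (1:B) * X : B[X]) ∈ HDStar K (Polynomial B) := hT
    simpa using this
  have hall : ∀ f : B[X], f ∈ HDStar K (Polynomial B) := by
    intro f
    induction f using Polynomial.induction_on with
    | C a => exact hCmem a
    | add p q hp hq => exact add_mem hp hq
    | monomial n a hp =>
      rw [pow_succ, ← mul_assoc]
      exact mul_mem hp hX
  rw [eq_top_iff]
  exact fun f _ => hall f
end

section
/- Let K be an algebraically closed field of characteristic zero, B a finitely generated commutative K-algebra that is an integral domain, and m a maximal ideal of B. Suppose that for every LND D of B[u], D maps the extension ideal m·B[u] into itself. Then HD*(B[u]) ≠ B[u]. -/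
open Polynomial

/-- A derivation on K[X] with a slice kills only constants. -/
lemma aux_ker_deriv_const {K : Type*} [Field K] [CharZero K]
    (E : Derivation K K[X] K[X]) (s : K[X]) (hs : E s = 1) {p : K[X]} (hp : E p = 0) :
    p ∈ (⊥ : Subalgebra K K[X]) := by
  have key : ∀ q : K[X], E q = derivative q * E X := by
    intro q
    have := E.map_aeval (R := K) q X
    rwa [aeval_X_left_apply, aeval_X_left_apply, smul_eq_mul] at this
  have hu : IsUnit (E X) := by
    have := key s
    rw [hs] at this
    exact IsUnit.of_mul_eq_one _ (by rw [this, mul_comm])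
  have hEX : E X ≠ 0 := hu.ne_zero
  have : derivative p = 0 := by
    have := key p
    rw [hp] at this
    exact (mul_eq_zero.mp this.symm).resolve_right hEX
  have : p.natDegree = 0 := natDegree_eq_zero_of_derivative_eq_zero this
  rw [Polynomial.eq_C_of_natDegree_eq_zero this]
  exact Subalgebra.algebraMap_mem _ _

/-- Nullstellensatz: there is a K-algebra map B → K with kernel m. -/
lemma aux_exists_psi {K B : Type*} [Field K] [IsAlgClosed K]
    [CommRing B] [Algebra K B] [Algebra.FiniteType K B]
    (m : Ideal B) (hm : m.IsMaximal) :
    ∃ ψ : B →ₐ[K] K, ∀ x, ψ x = 0 ↔ x ∈ m := by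
  letI := Ideal.Quotient.field m
  have hft : Algebra.FiniteType K (B ⧸ m) :=
    Algebra.FiniteType.of_surjective (Ideal.Quotient.mkₐ K m)
      (Ideal.Quotient.mkₐ_surjective K m)
  have hfin : Module.Finite K (B ⧸ m) := finite_of_finite_type_of_isJacobsonRing K (B ⧸ m)
  have hint : Algebra.IsIntegral K (B ⧸ m) := Algebra.IsIntegral.of_finite K (B ⧸ m)
  have hsurj : Function.Surjective (algebraMap K (B ⧸ m)) :=
    IsAlgClosed.algebraMap_bijective_of_isIntegral.2
  have hbij : Function.Bijective (Algebra.ofId K (B ⧸ m)) :=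
    ⟨(Algebra.ofId K (B ⧸ m)).toRingHom.injective, hsurj⟩
  let e : K ≃ₐ[K] (B ⧸ m) := AlgEquiv.ofBijective _ hbij
  refine ⟨e.symm.toAlgHom.comp (Ideal.Quotient.mkₐ K m), fun x => ?_⟩
  constructor
  · intro hx
    have h1 : e.symm (Ideal.Quotient.mk m x) = 0 := hx
    have h2 : (Ideal.Quotient.mk m x) = e 0 := by
      rw [← h1, AlgEquiv.apply_symm_apply]
    rw [map_zero] at h2
    exact (Ideal.Quotient.eq_zero_iff_mem).mp h2
  · intro hx
    have h1 : Ideal.Quotient.mk m x = 0 := Ideal.Quotient.eq_zero_iff_mem.mpr hx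
    show e.symm (Ideal.Quotient.mk m x) = 0
    rw [h1, map_zero]

theorem stmt6 {K B : Type*} [Field K] [IsAlgClosed K] [CharZero K]
    [CommRing B] [IsDomain B] [Algebra K B] [Algebra.FiniteType K B]
    (m : Ideal B) (hm : m.IsMaximal)
    (h : ∀ D : Derivation K (Polynomial B) (Polynomial B), IsLND D →
      ∀ x ∈ m.map (Polynomial.C : B →+* Polynomial B),
        D x ∈ m.map (Polynomial.C : B →+* Polynomial B)) :
    HDStar K (Polynomial B) ≠ ⊤ := by
  obtain ⟨ψ, hψ⟩ := aux_exists_psi (K := K) m hm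
  set M : Ideal (Polynomial B) := m.map (Polynomial.C : B →+* Polynomial B) with hM
  -- the projection and section
  let Φ : Polynomial B →ₐ[K] K[X] := mapAlgHom ψ
  let σ : K[X] →ₐ[K] Polynomial B := mapAlgHom (Algebra.ofId K B)
  have hΦσ : ∀ p : K[X], Φ (σ p) = p := by
    intro p
    show map (ψ : B →+* K) (map (algebraMap K B) p) = p
    rw [map_map]
    have : (ψ : B →+* K).comp (algebraMap K B) = RingHom.id K := by
      ext k; exact ψ.commutes k
    rw [this, map_id]
  have hker : ∀ p : Polynomial B, Φ p = 0 ↔ p ∈ M := by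
    intro p
    rw [hM, Ideal.mem_map_C_iff]
    constructor
    · intro hp n
      have := congrArg (fun q => Polynomial.coeff q n) hp
      simp only [Φ, coe_mapAlgHom, coeff_map, coeff_zero] at this
      exact (hψ _).mp this
    · intro hp
      ext n
      simp only [Φ, coe_mapAlgHom, coeff_map, coeff_zero]
      exact (hψ _).mpr (hp n)
  -- X is not in the comap subalgebra
  intro htop
  have hX : (X : Polynomial B) ∈ Subalgebra.comap Φ (⊥ : Subalgebra K K[X]) := by
    have hle : HDStar K (Polynomial B) ≤ Subalgebra.comap Φ (⊥ : Subalgebra K K[X]) := by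
      apply Algebra.adjoin_le
      rintro a ⟨D, hD, ⟨s, hs⟩, ha⟩
      -- push the derivation down to K[X]
      let E : Derivation K K[X] K[X] :=
        { toLinearMap := Φ.toLinearMap ∘ₗ D.toLinearMap ∘ₗ σ.toLinearMap
          map_one_eq_zero' := by
            simp only [LinearMap.coe_comp, Function.comp_apply, AlgHom.toLinearMap_apply]
            rw [map_one, Derivation.coeFn_coe, Derivation.map_one_eq_zero, map_zero]
          leibniz' := fun a b => by
            simp only [LinearMap.coe_comp, Function.comp_apply, AlgHom.toLinearMap_apply,
              Derivation.coeFn_coe, smul_eq_mul]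
            rw [map_mul, Derivation.leibniz, smul_eq_mul, smul_eq_mul, map_add, map_mul,
              map_mul, hΦσ, hΦσ] }
      have hEΦ : ∀ x : Polynomial B, E (Φ x) = Φ (D x) := by
        intro x
        show Φ (D (σ (Φ x))) = Φ (D x)
        have hmem : σ (Φ x) - x ∈ M := by
          rw [← hker]
          rw [map_sub, hΦσ, sub_self]
        have hDmem : D (σ (Φ x) - x) ∈ M := h D hD _ hmem
        have : Φ (D (σ (Φ x) - x)) = 0 := (hker _).mpr hDmem
        rw [map_sub, map_sub] at this
        exact sub_eq_zero.mp this
      have hEs : E (Φ s) = 1 := by rw [hEΦ, hs, map_one]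
      have hEa : E (Φ a) = 0 := by rw [hEΦ, ha, map_zero]
      exact aux_ker_deriv_const E (Φ s) hEs hEa
    rw [htop] at hle
    exact hle (by trivial)
  have : (Φ X : K[X]) ∈ (⊥ : Subalgebra K K[X]) := hX
  have hΦX : Φ (X : Polynomial B) = X := by simp [Φ, coe_mapAlgHom]
  rw [hΦX, Algebra.mem_bot] at this
  obtain ⟨k, hk⟩ := this
  have : (X : K[X]).natDegree = 0 := by
    rw [← hk]; exact natDegree_C k ▸ (by simp)
  simp at this
end

section
/- Let K be a field of characteristic zero, A a commutative K-algebra, and U a K-linear subspace of A such that φ(U) ⊆ U for every K-algebra automorphism φ of A. Then D(U) ⊆ U for every LND D of A. -/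
set_option linter.unusedSectionVars false

open Finset

section
variable {K A : Type*} [Field K] [CharZero K] [CommRing A] [Algebra K A]
variable (D : Derivation K A A)

namespace LNDExp

lemma iter_zero (n : ℕ) : (⇑D)^[n] (0 : A) = 0 :=
  Function.iterate_fixed (map_zero D) n

lemma iter_add (n : ℕ) (a b : A) : (⇑D)^[n] (a + b) = (⇑D)^[n] a + (⇑D)^[n] b := by
  induction n with
  | zero => rfl
  | succ n ih =>
    rw [Function.iterate_succ_apply', Function.iterate_succ_apply',
      Function.iterate_succ_apply', ih, map_add]

lemma iter_smul (n : ℕ) (c : K) (a : A) : (⇑D)^[n] (c • a) = c • (⇑D)^[n] a := by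
  induction n with
  | zero => rfl
  | succ n ih =>
    rw [Function.iterate_succ_apply', Function.iterate_succ_apply', ih, Derivation.map_smul]

lemma iter_stab {a : A} {m k : ℕ} (h : (⇑D)^[m] a = 0) (hk : m ≤ k) :
    (⇑D)^[k] a = 0 := by
  obtain ⟨j, rfl⟩ := Nat.exists_eq_add_of_le hk
  rw [add_comm, Function.iterate_add_apply, h, iter_zero]

lemma iter_leibniz (a b : A) (n : ℕ) :
    (⇑D)^[n] (a * b)
      = ∑ i ∈ range (n + 1), n.choose i • ((⇑D)^[i] a * (⇑D)^[n - i] b) := by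
  induction n with
  | zero => simp
  | succ n ih =>
    rw [Function.iterate_succ_apply', ih, map_sum]
    have hterm : ∀ i, D (n.choose i • ((⇑D)^[i] a * (⇑D)^[n - i] b))
        = n.choose i • ((⇑D)^[i + 1] a * (⇑D)^[n - i] b)
          + n.choose i • ((⇑D)^[i] a * (⇑D)^[n - i + 1] b) := by
      intro i
      rw [map_nsmul, D.leibniz, smul_eq_mul, smul_eq_mul, smul_add,
        Function.iterate_succ_apply', Function.iterate_succ_apply']
      ring_nf
    rw [Finset.sum_congr rfl fun i _ => hterm i, Finset.sum_add_distrib]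
    rw [Finset.sum_range_succ'
      (fun i => (n + 1).choose i • ((⇑D)^[i] a * (⇑D)^[n + 1 - i] b)) (n + 1)]
    have hsplit : ∀ i ∈ range (n + 1),
        (n + 1).choose (i + 1) • ((⇑D)^[i + 1] a * (⇑D)^[n + 1 - (i + 1)] b)
        = n.choose i • ((⇑D)^[i + 1] a * (⇑D)^[n - i] b)
          + n.choose (i + 1) • ((⇑D)^[i + 1] a * (⇑D)^[n - i] b) := by
      intro i _
      have h1 : n + 1 - (i + 1) = n - i := by omega
      rw [h1, Nat.choose_succ_succ, add_nsmul]
    rw [Finset.sum_congr rfl hsplit, Finset.sum_add_distrib, add_assoc]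
    congr 1
    have h2 : ∑ i ∈ range (n + 1), n.choose i • ((⇑D)^[i] a * (⇑D)^[n - i + 1] b)
        = ∑ i ∈ range n, n.choose (i + 1) • ((⇑D)^[i + 1] a * (⇑D)^[n - (i + 1) + 1] b)
          + n.choose 0 • ((⇑D)^[0] a * (⇑D)^[n - 0 + 1] b) :=
      Finset.sum_range_succ' _ n
    rw [h2, Finset.sum_range_succ
      (fun i => n.choose (i + 1) • ((⇑D)^[i + 1] a * (⇑D)^[n - i] b)) n,
      Nat.choose_succ_self, zero_nsmul, add_zero]
    have h3 : ∀ i ∈ range n, n.choose (i + 1) • ((⇑D)^[i + 1] a * (⇑D)^[n - (i + 1) + 1] b)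
        = n.choose (i + 1) • ((⇑D)^[i + 1] a * (⇑D)^[n - i] b) := by
      intro i hi
      have : n - (i + 1) + 1 = n - i := by
        have := Finset.mem_range.mp hi; omega
      rw [this]
    rw [Finset.sum_congr rfl h3]
    simp

noncomputable def coeffK (t : K) (i : ℕ) : K := t ^ i / (i.factorial : K)

lemma coeffK_zero (t : K) : coeffK t 0 = 1 := by simp [coeffK]

lemma coeffK_mul_choose {k i : ℕ} (h : i ≤ k) (t : K) :
    coeffK t k * (k.choose i : K) = coeffK t i * coeffK t (k - i) := by
  rw [coeffK, coeffK, coeffK, Nat.cast_choose K h]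
  have h1 : (Nat.factorial i : K) ≠ 0 := Nat.cast_ne_zero.2 (Nat.factorial_ne_zero i)
  have h2 : (Nat.factorial (k - i) : K) ≠ 0 := Nat.cast_ne_zero.2 (Nat.factorial_ne_zero _)
  have h3 : (Nat.factorial k : K) ≠ 0 := Nat.cast_ne_zero.2 (Nat.factorial_ne_zero k)
  have hp : t ^ i * t ^ (k - i) = t ^ k := by
    rw [← pow_add]; congr 1; omega
  field_simp
  try rw [← hp]
  try ring

lemma coeffK_add (t s : K) (k : ℕ) :
    ∑ i ∈ range (k + 1), coeffK t i * coeffK s (k - i) = coeffK (t + s) k := by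
  have h : ∀ i ∈ range (k + 1), coeffK t i * coeffK s (k - i)
      = t ^ i * s ^ (k - i) * (k.choose i : K) / (k.factorial : K) := by
    intro i hi
    have hik : i ≤ k := Nat.lt_succ_iff.mp (Finset.mem_range.mp hi)
    rw [coeffK, coeffK, Nat.cast_choose K hik]
    have h1 : (Nat.factorial i : K) ≠ 0 := Nat.cast_ne_zero.2 (Nat.factorial_ne_zero i)
    have h2 : (Nat.factorial (k - i) : K) ≠ 0 := Nat.cast_ne_zero.2 (Nat.factorial_ne_zero _)
    have h3 : (Nat.factorial k : K) ≠ 0 := Nat.cast_ne_zero.2 (Nat.factorial_ne_zero k)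
    field_simp
    try ring
  rw [Finset.sum_congr rfl h, ← Finset.sum_div, coeffK, add_pow]

variable {D}

lemma expAux_stab (t : K) {a : A} {m n : ℕ} (h : (⇑D)^[m] a = 0) (hmn : m ≤ n) :
    ∑ i ∈ range n, coeffK t i • (⇑D)^[i] a = ∑ i ∈ range m, coeffK t i • (⇑D)^[i] a := by
  refine (Finset.sum_subset (Finset.range_subset_range.2 hmn) fun i _ hi => ?_).symm
  rw [iter_stab D h (le_of_not_gt (fun hlt => hi (Finset.mem_range.2 hlt))), smul_zero]

variable (hD : IsLND D)

noncomputable def nb (a : A) : ℕ := (hD a).choose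

lemma nb_spec (a : A) : (⇑D)^[nb hD a] a = 0 := (hD a).choose_spec.2

lemma nb_pos (a : A) : 1 ≤ nb hD a := (hD a).choose_spec.1

noncomputable def expD (t : K) (a : A) : A :=
  ∑ i ∈ range (nb hD a), coeffK t i • (⇑D)^[i] a

lemma expD_eq (t : K) {a : A} {m : ℕ} (h : (⇑D)^[m] a = 0) :
    expD hD t a = ∑ i ∈ range m, coeffK t i • (⇑D)^[i] a := by
  rw [expD, ← expAux_stab t (nb_spec hD a) (le_max_left _ m),
    expAux_stab t h (le_max_right (nb hD a) m)]

lemma expD_add (t : K) (a b : A) : expD hD t (a + b) = expD hD t a + expD hD t b := by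
  set m := max (nb hD a) (nb hD b) with hm
  have ha : (⇑D)^[m] a = 0 := iter_stab D (nb_spec hD a) (le_max_left _ _)
  have hb : (⇑D)^[m] b = 0 := iter_stab D (nb_spec hD b) (le_max_right _ _)
  have hab : (⇑D)^[m] (a + b) = 0 := by rw [iter_add, ha, hb, add_zero]
  rw [expD_eq hD t hab, expD_eq hD t ha, expD_eq hD t hb, ← Finset.sum_add_distrib]
  exact Finset.sum_congr rfl fun i _ => by rw [iter_add, smul_add]

lemma expD_smul (t : K) (c : K) (a : A) : expD hD t (c • a) = c • expD hD t a := by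
  have ha := nb_spec hD a
  have hca : (⇑D)^[nb hD a] (c • a) = 0 := by rw [iter_smul, ha, smul_zero]
  rw [expD_eq hD t hca, expD_eq hD t ha, Finset.smul_sum]
  exact Finset.sum_congr rfl fun i _ => by rw [iter_smul, smul_comm]

lemma expD_one (t : K) : expD hD t (1 : A) = 1 := by
  have h1 : (⇑D)^[1] (1 : A) = 0 := by simp
  rw [expD_eq hD t h1, Finset.sum_range_one, coeffK_zero]
  simp

lemma tri_sum {M : Type*} [AddCommMonoid M] (N : ℕ) (g : ℕ → ℕ → M)
    (hg : ∀ i j, N ≤ i + j → g i j = 0) :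
    ∑ k ∈ range N, ∑ i ∈ range (k + 1), g i (k - i)
      = ∑ p ∈ range N ×ˢ range N, g p.1 p.2 := by
  rw [← Finset.sum_sigma (range N) (fun k => range (k + 1))
    (fun p => g p.2 (p.1 - p.2))]
  rw [← Finset.sum_filter_of_ne
    (f := fun p : ℕ × ℕ => g p.1 p.2) (p := fun p : ℕ × ℕ => p.1 + p.2 < N)
    (fun p _ hne => by by_contra hlt; exact hne (hg p.1 p.2 (le_of_not_gt hlt)))]
  refine Finset.sum_bij' (fun p _ => (p.2, p.1 - p.2)) (fun q _ => ⟨q.1 + q.2, q.1⟩)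
    ?_ ?_ ?_ ?_ ?_
  · rintro ⟨k, i⟩ hp
    simp only [Finset.mem_sigma, Finset.mem_range] at hp
    simp only [Finset.mem_filter, Finset.mem_product, Finset.mem_range]
    omega
  · rintro ⟨i, j⟩ hq
    simp only [Finset.mem_filter, Finset.mem_product, Finset.mem_range] at hq
    simp only [Finset.mem_sigma, Finset.mem_range]
    omega
  · rintro ⟨k, i⟩ hp
    simp only [Finset.mem_sigma, Finset.mem_range] at hp
    simp only [Sigma.mk.inj_iff]
    constructor
    · omega
    · exact heq_of_eq rfl
  · rintro ⟨i, j⟩ hq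
    simp only [Finset.mem_filter, Finset.mem_product, Finset.mem_range] at hq
    simp only [Prod.mk.injEq]
    exact ⟨trivial, by omega⟩
  · rintro ⟨k, i⟩ _
    rfl

lemma expD_mul (t : K) (a b : A) : expD hD t (a * b) = expD hD t a * expD hD t b := by
  set p := nb hD a
  set q := nb hD b
  set N := p + q with hN
  have ha : ∀ i, p ≤ i → (⇑D)^[i] a = 0 := fun i hi => iter_stab D (nb_spec hD a) hi
  have hb : ∀ j, q ≤ j → (⇑D)^[j] b = 0 := fun j hj => iter_stab D (nb_spec hD b) hj
  have hXY : ∀ i j : ℕ, N ≤ i + j → (⇑D)^[i] a * (⇑D)^[j] b = 0 := by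
    intro i j hij
    rcases le_or_gt p i with h | h
    · rw [ha i h, zero_mul]
    · rw [hb j (by omega), mul_zero]
  have hab : (⇑D)^[N] (a * b) = 0 := by
    rw [iter_leibniz]
    refine Finset.sum_eq_zero fun i hi => ?_
    rw [hXY i (N - i) (by have := Finset.mem_range.mp hi; omega), smul_zero]
  have haN : (⇑D)^[N] a = 0 := ha N (by have := nb_pos hD b; omega)
  have hbN : (⇑D)^[N] b = 0 := hb N (by have := nb_pos hD a; omega)
  rw [expD_eq hD t hab, expD_eq hD t haN, expD_eq hD t hbN]
  have step : ∀ k ∈ range N, coeffK t k • (⇑D)^[k] (a * b)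
      = ∑ i ∈ range (k + 1),
          (coeffK t i * coeffK t (k - i)) • ((⇑D)^[i] a * (⇑D)^[k - i] b) := by
    intro k _
    rw [iter_leibniz, Finset.smul_sum]
    refine Finset.sum_congr rfl fun i hi => ?_
    have hik : i ≤ k := Nat.lt_succ_iff.mp (Finset.mem_range.mp hi)
    rw [← Nat.cast_smul_eq_nsmul K, smul_smul, coeffK_mul_choose hik]
  rw [Finset.sum_congr rfl step,
    tri_sum N (fun i j => (coeffK t i * coeffK t j) • ((⇑D)^[i] a * (⇑D)^[j] b))
      (fun i j hij => by rw [hXY i j hij, smul_zero]),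
    Finset.sum_product, Finset.sum_mul_sum]
  exact Finset.sum_congr rfl fun i _ => Finset.sum_congr rfl fun j _ =>
    (smul_mul_smul_comm _ _ _ _).symm

/-- `expD` as a linear map. -/
noncomputable def expL (t : K) : A →ₗ[K] A where
  toFun := expD hD t
  map_add' := expD_add hD t
  map_smul' := expD_smul hD t

lemma expD_comp (t s : K) (a : A) : expD hD t (expD hD s a) = expD hD (t + s) a := by
  set N := nb hD a
  have ha : ∀ i, N ≤ i → (⇑D)^[i] a = 0 := fun i hi => iter_stab D (nb_spec hD a) hi
  have h1 : expD hD s a = ∑ j ∈ range N, coeffK s j • (⇑D)^[j] a := expD_eq hD s (nb_spec hD a)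
  have h2 : expD hD t (expD hD s a)
      = ∑ j ∈ range N, coeffK s j • expD hD t ((⇑D)^[j] a) := by
    rw [h1, show expD hD t (∑ j ∈ range N, coeffK s j • (⇑D)^[j] a)
        = expL hD t (∑ j ∈ range N, coeffK s j • (⇑D)^[j] a) from rfl, map_sum]
    exact Finset.sum_congr rfl fun j _ => by rw [map_smul]; rfl
  rw [h2]
  have h3 : ∀ j ∈ range N, coeffK s j • expD hD t ((⇑D)^[j] a)
      = ∑ i ∈ range N, (coeffK t i * coeffK s j) • (⇑D)^[i + j] a := by
    intro j _
    have hj : (⇑D)^[N] ((⇑D)^[j] a) = 0 := by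
      rw [← Function.iterate_add_apply]
      exact ha (N + j) (by omega)
    rw [expD_eq hD t hj, Finset.smul_sum]
    refine Finset.sum_congr rfl fun i _ => ?_
    rw [← Function.iterate_add_apply, smul_smul, mul_comm (coeffK s j)]
  rw [Finset.sum_congr rfl h3, Finset.sum_comm]
  have h4 := tri_sum N (fun i j => (coeffK t i * coeffK s j) • (⇑D)^[i + j] a)
    (fun i j hij => by rw [ha (i + j) hij, smul_zero])
  rw [Finset.sum_product] at h4
  rw [← h4, expD_eq hD (t + s) (nb_spec hD a)]
  refine Finset.sum_congr rfl fun k hk => ?_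
  rw [← coeffK_add, Finset.sum_smul]
  refine Finset.sum_congr rfl fun i hi => ?_
  have hik : i ≤ k := Nat.lt_succ_iff.mp (Finset.mem_range.mp hi)
  have hk2 : i + (k - i) = k := by omega
  rw [hk2]

lemma expD_zero_eq (a : A) : expD hD 0 a = a := by
  rw [expD_eq hD 0 (nb_spec hD a)]
  rw [Finset.sum_eq_single 0]
  · simp [coeffK_zero]
  · intro i _ hi
    rw [coeffK, zero_pow hi, zero_div, zero_smul]
  · intro h
    exact absurd (Finset.mem_range.2 (nb_pos hD a)) h

/-- The exponential of `t • D` as an algebra homomorphism. -/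
noncomputable def expHom (t : K) : A →ₐ[K] A where
  toFun := expD hD t
  map_one' := expD_one hD t
  map_mul' := expD_mul hD t
  map_zero' := (expL hD t).map_zero
  map_add' := expD_add hD t
  commutes' := fun c => by
    show expD hD t (algebraMap K A c) = algebraMap K A c
    rw [Algebra.algebraMap_eq_smul_one, expD_smul, expD_one]

/-- The exponential of `t • D` as an algebra automorphism. -/
noncomputable def expAlg (t : K) : A ≃ₐ[K] A :=
  AlgEquiv.ofAlgHom (expHom hD t) (expHom hD (-t))
    (AlgHom.ext fun a => by
      show expD hD t (expD hD (-t) a) = a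
      rw [expD_comp, add_neg_cancel, expD_zero_eq])
    (AlgHom.ext fun a => by
      show expD hD (-t) (expD hD t a) = a
      rw [expD_comp, neg_add_cancel, expD_zero_eq])

lemma expAlg_apply (t : K) (a : A) : expAlg hD t a = expD hD t a := rfl

end LNDExp
end

theorem stmt9 {K A : Type*} [Field K] [CharZero K] [CommRing A] [Algebra K A]
    (U : Submodule K A) (hU : ∀ φ : A ≃ₐ[K] A, ∀ a ∈ U, φ a ∈ U)
    (D : Derivation K A A) (hD : IsLND D) :
    ∀ a ∈ U, D a ∈ U := by
  intro a ha
  obtain ⟨n, hn1, hn⟩ := hD a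
  set v : Fin n → A := fun i => ((Nat.factorial (i : ℕ) : K))⁻¹ • (⇑D)^[(i : ℕ)] a with hv
  have hw : ∀ t : K, ∑ i : Fin n, t ^ (i : ℕ) • v i ∈ U := by
    intro t
    have hmem := hU (LNDExp.expAlg hD t) a ha
    rw [LNDExp.expAlg_apply, LNDExp.expD_eq hD t hn, Finset.sum_range] at hmem
    have he : ∀ i : Fin n, t ^ (i : ℕ) • v i = LNDExp.coeffK t (i : ℕ) • (⇑D)^[(i : ℕ)] a := by
      intro i
      rw [hv, smul_smul, LNDExp.coeffK, div_eq_mul_inv]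
    rw [Finset.sum_congr rfl fun i _ => he i]
    exact hmem
  set M : Matrix (Fin n) (Fin n) K := Matrix.vandermonde (fun i => ((i : ℕ) : K)) with hM
  have hdet : IsUnit M.det := by
    rw [hM, Matrix.det_vandermonde]
    refine isUnit_iff_ne_zero.2 (Finset.prod_ne_zero_iff.2 fun i _ =>
      Finset.prod_ne_zero_iff.2 fun j hj => ?_)
    have hij0 : i < j := Finset.mem_Ioi.mp hj
    have hij : (i : ℕ) < (j : ℕ) := hij0
    have hne : ((i : ℕ) : K) ≠ ((j : ℕ) : K) := by exact_mod_cast hij.ne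
    exact sub_ne_zero.2 (Ne.symm hne)
  have hMinv : M⁻¹ * M = 1 := Matrix.nonsing_inv_mul M hdet
  have hv_mem : ∀ j : Fin n, v j ∈ U := by
    intro j
    have key : v j = ∑ r : Fin n, M⁻¹ j r • ∑ i : Fin n, M r i • v i := by
      have : ∀ r : Fin n, M⁻¹ j r • ∑ i : Fin n, M r i • v i
          = ∑ i : Fin n, (M⁻¹ j r * M r i) • v i := by
        intro r
        rw [Finset.smul_sum]
        exact Finset.sum_congr rfl fun i _ => by rw [smul_smul]
      rw [Finset.sum_congr rfl fun r _ => this r, Finset.sum_comm]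
      have h2 : ∀ i : Fin n, ∑ r : Fin n, (M⁻¹ j r * M r i) • v i
          = ((M⁻¹ * M) j i) • v i := by
        intro i
        rw [← Finset.sum_smul, Matrix.mul_apply]
      rw [Finset.sum_congr rfl fun i _ => h2 i, hMinv]
      simp [Matrix.one_apply]
    rw [key]
    refine Submodule.sum_mem U fun r _ => Submodule.smul_mem U _ ?_
    have : ∀ i : Fin n, M r i • v i = (((r : ℕ) : K)) ^ (i : ℕ) • v i := by
      intro i
      rw [hM, Matrix.vandermonde_apply]
    rw [Finset.sum_congr rfl fun i _ => this i]
    exact hw _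
  rcases Nat.lt_or_ge 1 n with h1 | h1
  · have hva : v ⟨1, h1⟩ = D a := by
      rw [hv]
      simp
    rw [← hva]
    exact hv_mem _
  · have hn1' : n = 1 := le_antisymm h1 hn1
    subst hn1'
    have : D a = 0 := by simpa using hn
    rw [this]
    exact U.zero_mem
end

section
/- Let K be a field of characteristic zero and A a commutative K-algebra equipped with a ℤ-grading A = ⊕_{i∈ℤ} A_i. Let U be a K-linear subspace of A such that φ(U) ⊆ U for every K-algebra automorphism φ of A. Then U is homogeneous: for every element of U, each of its homogeneous components lies in U, i.e. U = ⊕_{i∈ℤ} (U ∩ A_i). -/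
section aux

variable {K A : Type*} [Field K] [CommRing A] [Algebra K A]
    (𝒜 : ℤ → Submodule K A) [GradedAlgebra 𝒜]

noncomputable def scaleHom (t : K) (ht : t ≠ 0) : A →ₐ[K] A :=
  (DirectSum.toAlgebra K (fun i => 𝒜 i) (fun i => t ^ i • (𝒜 i).subtype)
    (by simp [SetLike.coe_gOne])
    (by
      intro i j ai aj
      simp only [LinearMap.smul_apply, Submodule.subtype_apply, SetLike.coe_gMul]
      rw [smul_mul_smul_comm, ← zpow_add₀ ht])).comp
    (DirectSum.decomposeAlgEquiv 𝒜).toAlgHom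

theorem scaleHom_of_mem (t : K) (ht : t ≠ 0) {i : ℤ} {x : A} (hx : x ∈ 𝒜 i) :
    scaleHom 𝒜 t ht x = t ^ i • x := by
  simp only [scaleHom, AlgHom.coe_comp, Function.comp_apply, AlgEquiv.toAlgHom_eq_coe,
    AlgHom.coe_coe, DirectSum.decomposeAlgEquiv_apply]
  rw [show (DirectSum.decomposeAlgEquiv 𝒜 : A →ₐ[K] _) x = DirectSum.decompose 𝒜 x from rfl,
    DirectSum.decompose_of_mem 𝒜 hx]
  erw [DirectSum.toSemiring_of]
  · rfl
  · simp [SetLike.coe_gOne]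
  · intro i j ai aj
    simp only [LinearMap.toAddMonoidHom_coe, LinearMap.smul_apply, Submodule.subtype_apply,
      SetLike.coe_gMul]
    rw [smul_mul_smul_comm, ← zpow_add₀ ht]

noncomputable def scaleAut (t : K) (ht : t ≠ 0) : A ≃ₐ[K] A :=
  AlgEquiv.ofAlgHom (scaleHom 𝒜 t ht) (scaleHom 𝒜 t⁻¹ (inv_ne_zero ht))
    (by
      ext a
      classical
      simp only [AlgHom.coe_comp, Function.comp_apply, AlgHom.coe_id, id_eq]
      conv_lhs => rw [← DirectSum.sum_support_decompose 𝒜 a]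
      rw [map_sum, map_sum]
      conv_rhs => rw [← DirectSum.sum_support_decompose 𝒜 a]
      refine Finset.sum_congr rfl fun i _ => ?_
      rw [scaleHom_of_mem 𝒜 _ _ (SetLike.coe_mem _),
        scaleHom_of_mem 𝒜 _ _ (Submodule.smul_mem _ _ (SetLike.coe_mem _)),
        smul_smul, ← mul_zpow, mul_inv_cancel₀ ht, one_zpow, one_smul])
    (by
      ext a
      classical
      simp only [AlgHom.coe_comp, Function.comp_apply, AlgHom.coe_id, id_eq]
      conv_lhs => rw [← DirectSum.sum_support_decompose 𝒜 a]
      rw [map_sum, map_sum]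
      conv_rhs => rw [← DirectSum.sum_support_decompose 𝒜 a]
      refine Finset.sum_congr rfl fun i _ => ?_
      rw [scaleHom_of_mem 𝒜 _ _ (SetLike.coe_mem _),
        scaleHom_of_mem 𝒜 _ _ (Submodule.smul_mem _ _ (SetLike.coe_mem _)),
        smul_smul, ← mul_zpow, inv_mul_cancel₀ ht, one_zpow, one_smul])

theorem scaleAut_apply (t : K) (ht : t ≠ 0) (a : A) :
    scaleAut 𝒜 t ht a = scaleHom 𝒜 t ht a := rfl

theorem decompose_scaleHom (t : K) (ht : t ≠ 0) (a : A) (i : ℤ) :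
    (DirectSum.decompose 𝒜 (scaleHom 𝒜 t ht a) i : A) =
      t ^ i • (DirectSum.decompose 𝒜 a i : A) := by
  classical
  conv_lhs => rw [← DirectSum.sum_support_decompose 𝒜 a]
  rw [map_sum, DirectSum.decompose_sum, DFinsupp.finset_sum_apply,
    AddSubmonoidClass.coe_finset_sum]
  by_cases hi : i ∈ DFinsupp.support (DirectSum.decompose 𝒜 a)
  · rw [Finset.sum_eq_single_of_mem i hi]
    · rw [scaleHom_of_mem 𝒜 t ht (SetLike.coe_mem _),
        DirectSum.decompose_of_mem_same 𝒜 (Submodule.smul_mem _ _ (SetLike.coe_mem _))]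
    · intro j _ hj
      rw [scaleHom_of_mem 𝒜 t ht (SetLike.coe_mem _),
        DirectSum.decompose_of_mem_ne 𝒜 (Submodule.smul_mem _ _ (SetLike.coe_mem _)) hj]
  · rw [DFinsupp.notMem_support_iff] at hi
    rw [Finset.sum_eq_zero, hi, ZeroMemClass.coe_zero, smul_zero]
    intro j hj
    have hji : j ≠ i := fun h => by
      rw [h] at hj
      exact DFinsupp.mem_support_iff.mp hj hi
    rw [scaleHom_of_mem 𝒜 t ht (SetLike.coe_mem _),
      DirectSum.decompose_of_mem_ne 𝒜 (Submodule.smul_mem _ _ (SetLike.coe_mem _)) hji]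

end aux

lemma two_zpow_inj {K : Type*} [Field K] [CharZero K] {m n : ℤ} (h : (2:K)^m = (2:K)^n) :
    m = n := by
  have h2 : ((2:ℚ)^m) = ((2:ℚ)^n) := by
    apply Rat.cast_injective (α := K)
    push_cast
    exact h
  exact zpow_right_injective₀ two_pos (by norm_num) h2

theorem stmt10 {K A : Type*} [Field K] [CharZero K] [CommRing A] [Algebra K A]
    (𝒜 : ℤ → Submodule K A) [GradedAlgebra 𝒜]
    (U : Submodule K A) (hU : ∀ φ : A ≃ₐ[K] A, ∀ a ∈ U, φ a ∈ U) :
    ∀ a ∈ U, ∀ i : ℤ, (DirectSum.decompose 𝒜 a i : A) ∈ U := by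
  classical
  suffices H : ∀ n : ℕ, ∀ a ∈ U, (DFinsupp.support (DirectSum.decompose 𝒜 a)).card = n →
      ∀ i : ℤ, (DirectSum.decompose 𝒜 a i : A) ∈ U by
    exact fun a ha i => H _ a ha rfl i
  intro n
  induction n using Nat.strong_induction_on with
  | _ n IH =>
    intro a ha hcard i
    by_cases hi : i ∈ DFinsupp.support (DirectSum.decompose 𝒜 a)
    swap
    · rw [DFinsupp.notMem_support_iff] at hi
      rw [hi, ZeroMemClass.coe_zero]
      exact U.zero_mem
    -- the twisted element
    set s := DFinsupp.support (DirectSum.decompose 𝒜 a) with hs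
    have h2 : (2 : K) ≠ 0 := two_ne_zero
    set b : A := scaleAut 𝒜 2 h2 a - (2:K)^i • a with hb
    have hbU : b ∈ U := U.sub_mem (hU _ a ha) (U.smul_mem _ ha)
    have hbk : ∀ k : ℤ, (DirectSum.decompose 𝒜 b k : A) =
        ((2:K)^k - (2:K)^i) • (DirectSum.decompose 𝒜 a k : A) := by
      intro k
      rw [hb, DirectSum.decompose_sub, DirectSum.decompose_smul, DFinsupp.sub_apply,
        AddSubgroupClass.coe_sub, scaleAut_apply, decompose_scaleHom, DFinsupp.smul_apply,
        Submodule.coe_smul, sub_smul]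
    have hsub : DFinsupp.support (DirectSum.decompose 𝒜 b) ⊆ s.erase i := by
      intro k hk
      rw [DFinsupp.mem_support_iff] at hk
      rw [Finset.mem_erase]
      constructor
      · rintro rfl
        exact hk (by rw [← ZeroMemClass.coe_eq_zero (S' := 𝒜 k), hbk, sub_self, zero_smul] ; )
      · rw [hs, DFinsupp.mem_support_iff]
        intro h0
        exact hk (by rw [← ZeroMemClass.coe_eq_zero (S' := 𝒜 k), hbk, h0,
          ZeroMemClass.coe_zero, smul_zero])
    have hcardb : (DFinsupp.support (DirectSum.decompose 𝒜 b)).card < n := by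
      calc (DFinsupp.support (DirectSum.decompose 𝒜 b)).card
          ≤ (s.erase i).card := Finset.card_le_card hsub
        _ < s.card := Finset.card_erase_lt_of_mem hi
        _ = n := hcard
    have hbcomp : ∀ k, (DirectSum.decompose 𝒜 b k : A) ∈ U := IH _ hcardb b hbU rfl
    -- components of a at k ≠ i
    have hak : ∀ k : ℤ, k ≠ i → (DirectSum.decompose 𝒜 a k : A) ∈ U := by
      intro k hk
      have hne : (2:K)^k - (2:K)^i ≠ 0 := sub_ne_zero.mpr (fun h => hk (two_zpow_inj h))
      have : (DirectSum.decompose 𝒜 a k : A) =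
          ((2:K)^k - (2:K)^i)⁻¹ • (DirectSum.decompose 𝒜 b k : A) := by
        rw [hbk, smul_smul, inv_mul_cancel₀ hne, one_smul]
      rw [this]
      exact U.smul_mem _ (hbcomp k)
    -- the i-component
    have hsum : (DirectSum.decompose 𝒜 a i : A) =
        a - ∑ k ∈ s.erase i, (DirectSum.decompose 𝒜 a k : A) := by
      rw [eq_sub_iff_add_eq]
      conv_rhs => rw [← DirectSum.sum_support_decompose 𝒜 a]
      exact Finset.add_sum_erase s (fun k => ((DirectSum.decompose 𝒜 a k : A))) hi
    rw [hsum]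
    exact U.sub_mem ha (Submodule.sum_mem U fun k hk =>
      hak k (Finset.ne_of_mem_erase hk))
end

section
/- Let K be a field of characteristic zero and A a finitely generated commutative K-algebra equipped with a ℤ-grading A = ⊕_{i∈ℤ} A_i. If A admits a nonzero locally nilpotent K-derivation, then A admits a nonzero locally nilpotent K-derivation that is homogeneous of some degree d ∈ ℤ. -/
/-- A K-derivation is homogeneous of degree `d` w.r.t. the ℤ-grading `𝒜` if it maps
`𝒜 i` into `𝒜 (i + d)` for every `i`. -/
def IsHomogOfDeg {K A : Type*} [CommRing K] [CommRing A] [Algebra K A]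
    (𝒜 : ℤ → Submodule K A) (D : Derivation K A A) (d : ℤ) : Prop :=
  ∀ i : ℤ, ∀ a ∈ 𝒜 i, D a ∈ 𝒜 (i + d)

namespace Stmt13Aux

open DirectSum

variable {K A : Type*} [CommRing K] [CommRing A] [Algebra K A]
variable (𝒜 : ℤ → Submodule K A) [GradedAlgebra 𝒜]

/-- projection onto degree `i` as a `K`-linear map. -/
noncomputable def projL (i : ℤ) : A →ₗ[K] A :=
  (𝒜 i).subtype ∘ₗ (DirectSum.component K ℤ (fun j => ↥(𝒜 j)) i) ∘ₗ
    (DirectSum.decomposeLinearEquiv 𝒜).toLinearMap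

lemma projL_apply (i : ℤ) (a : A) : projL 𝒜 i a = (decompose 𝒜 a i : A) := rfl

lemma projL_mem (i : ℤ) (a : A) : projL 𝒜 i a ∈ 𝒜 i := (decompose 𝒜 a i).2

lemma projL_of_mem_same {i : ℤ} {a : A} (ha : a ∈ 𝒜 i) : projL 𝒜 i a = a := by
  rw [projL_apply, decompose_of_mem_same 𝒜 ha]

lemma projL_of_mem_ne {i j : ℤ} {a : A} (ha : a ∈ 𝒜 i) (hij : i ≠ j) : projL 𝒜 j a = 0 := by
  rw [projL_apply, decompose_of_mem_ne 𝒜 ha hij]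

/-- The degree-`d` homogeneous component of a derivation, as a linear map. -/
noncomputable def compL (D : Derivation K A A) (d : ℤ) : A →ₗ[K] A :=
  (DirectSum.toModule K ℤ A fun i => projL 𝒜 (i + d) ∘ₗ (D : A →ₗ[K] A) ∘ₗ (𝒜 i).subtype) ∘ₗ
    (DirectSum.decomposeLinearEquiv 𝒜).toLinearMap

lemma compL_of_mem (D : Derivation K A A) (d : ℤ) {i : ℤ} {a : A} (ha : a ∈ 𝒜 i) :
    compL 𝒜 D d a = projL 𝒜 (i + d) (D a) := by
  have h : decompose 𝒜 a = DirectSum.lof K ℤ (fun j => ↥(𝒜 j)) i ⟨a, ha⟩ := by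
    rw [decompose_of_mem 𝒜 ha, DirectSum.lof_eq_of]
  simp only [compL, LinearMap.comp_apply, LinearEquiv.coe_coe, decomposeLinearEquiv_apply, h,
    DirectSum.toModule_lof]
  rfl

lemma sum_projL [∀ (i : ℤ) (x : 𝒜 i), Decidable (x ≠ 0)] (a : A) :
    ∑ i ∈ (decompose 𝒜 a).support, projL 𝒜 i a = a := by
  conv_rhs => rw [← DirectSum.sum_support_decompose 𝒜 a]
  exact Finset.sum_congr rfl fun i _ => rfl

lemma projL_D (D : Derivation K A A) (a : A) (j : ℤ)
    [∀ (i : ℤ) (x : 𝒜 i), Decidable (x ≠ 0)] :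
    projL 𝒜 j (D a) = ∑ i ∈ (decompose 𝒜 a).support, compL 𝒜 D (j - i) (projL 𝒜 i a) := by
  conv_lhs => rw [← sum_projL 𝒜 a, map_sum, map_sum]
  refine Finset.sum_congr rfl fun i _ => ?_
  rw [compL_of_mem 𝒜 D (j - i) (projL_mem 𝒜 i a)]
  have h : i + (j - i) = j := by omega
  rw [h]

lemma projL_D_top (D : Derivation K A A) {s : ℤ} (hs : ∀ d, s < d → compL 𝒜 D d = 0)
    {t : ℤ} {a : A} (hbd : ∀ i, t < i → projL 𝒜 i a = 0) :
    (∀ j, t + s < j → projL 𝒜 j (D a) = 0) ∧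
      projL 𝒜 (t + s) (D a) = compL 𝒜 D s (projL 𝒜 t a) := by
  classical
  constructor
  · intro j hj
    rw [projL_D]
    refine Finset.sum_eq_zero fun i _ => ?_
    by_cases hit : t < i
    · rw [hbd i hit, map_zero]
    · rw [hs (j - i) (by omega), LinearMap.zero_apply]
  · rw [projL_D, Finset.sum_eq_single t ?_ ?_]
    · have h : t + s - t = s := by omega
      rw [h]
    · intro i _ hit
      rcases lt_or_gt_of_ne hit with h | h
      · rw [hs (t + s - i) (by omega), LinearMap.zero_apply]
      · rw [hbd i h, map_zero]
    · intro ht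
      have h0 : projL 𝒜 t a = 0 := by
        rw [projL_apply, DFinsupp.notMem_support_iff.mp ht, ZeroMemClass.coe_zero]
      rw [h0, map_zero]

lemma iterate_top (D : Derivation K A A) {s : ℤ} (hs : ∀ d, s < d → compL 𝒜 D d = 0)
    {t : ℤ} {a : A} (ha : a ∈ 𝒜 t) (n : ℕ) :
    (∀ j, t + n * s < j → projL 𝒜 j ((⇑D)^[n] a) = 0) ∧
      projL 𝒜 (t + n * s) ((⇑D)^[n] a) = (⇑(compL 𝒜 D s))^[n] a := by
  induction n with
  | zero =>
    refine ⟨fun j hj => projL_of_mem_ne 𝒜 ha (by simp at hj; omega), ?_⟩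
    simpa using projL_of_mem_same 𝒜 ha
  | succ n ih =>
    obtain ⟨ih1, ih2⟩ := ih
    have key := projL_D_top 𝒜 D hs (t := t + n * s) (a := (⇑D)^[n] a) ih1
    have hrw : ((n + 1 : ℕ) : ℤ) * s = (n : ℤ) * s + s := by push_cast; ring
    rw [Function.iterate_succ_apply', Function.iterate_succ_apply']
    constructor
    · intro j hj
      refine key.1 j ?_
      rw [hrw] at hj
      linarith
    · have h2 := key.2
      rw [ih2] at h2
      rw [hrw, ← add_assoc]
      exact h2

/-- The degree-`d` homogeneous component of a derivation is again a derivation. -/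
noncomputable def compD (D : Derivation K A A) (d : ℤ) : Derivation K A A where
  toLinearMap := compL 𝒜 D d
  map_one_eq_zero' := by
    have h1 : (1 : A) ∈ 𝒜 0 := SetLike.one_mem_graded 𝒜
    show compL 𝒜 D d 1 = 0
    rw [compL_of_mem 𝒜 D d h1, Derivation.map_one_eq_zero, map_zero]
  leibniz' := by
    have core : ∀ (i j : ℤ) (a b : A), a ∈ 𝒜 i → b ∈ 𝒜 j →
        compL 𝒜 D d (a * b) = a • compL 𝒜 D d b + b • compL 𝒜 D d a := by
      intro i j a b ha hb
      rw [compL_of_mem 𝒜 D d (SetLike.mul_mem_graded ha hb)]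
      rw [Derivation.leibniz, smul_eq_mul, smul_eq_mul, map_add, smul_eq_mul, smul_eq_mul]
      congr 1
      · rw [projL_apply]
        have h : i + j + d = i + (j + d) := by ring
        rw [h, DirectSum.coe_decompose_mul_add_of_left_mem 𝒜 ha,
          compL_of_mem 𝒜 D d hb, projL_apply]
      · rw [projL_apply]
        have h : i + j + d = j + (i + d) := by ring
        rw [h, DirectSum.coe_decompose_mul_add_of_left_mem 𝒜 hb,
          compL_of_mem 𝒜 D d ha, projL_apply]
    intro a b
    induction a using DirectSum.Decomposition.inductionOn 𝒜 with
    | zero => simp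
    | @homogeneous i m =>
      induction b using DirectSum.Decomposition.inductionOn 𝒜 with
      | zero => simp
      | @homogeneous j m' => exact core i j m m' m.2 m'.2
      | add x y hx hy =>
        simp only [mul_add, map_add, hx, hy, smul_eq_mul]
        ring
    | add x y hx hy =>
      simp only [add_mul, map_add, hx, hy, smul_eq_mul]
      ring

lemma compD_apply (D : Derivation K A A) (d : ℤ) (a : A) :
    compD 𝒜 D d a = compL 𝒜 D d a := rfl

lemma compL_eq_zero_of_compD (D : Derivation K A A) (d : ℤ) (h : compD 𝒜 D d = 0) :
    compL 𝒜 D d = 0 := by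
  ext a
  rw [← compD_apply, h]
  rfl

/-- If all homogeneous components of `D` vanish, then `D = 0`. -/
lemma eq_zero_of_comps (D : Derivation K A A) (h : ∀ d, compL 𝒜 D d = 0) : D = 0 := by
  classical
  have hom : ∀ (i : ℤ) (a : A), a ∈ 𝒜 i → D a = 0 := by
    intro i a ha
    rw [← DirectSum.sum_support_decompose 𝒜 (D a)]
    refine Finset.sum_eq_zero fun j _ => ?_
    have : compL 𝒜 D (j - i) a = (decompose 𝒜 (D a) j : A) := by
      rw [compL_of_mem 𝒜 D (j - i) ha]
      have hji : i + (j - i) = j := by omega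
      rw [hji, projL_apply]
    rw [← this, h (j - i), LinearMap.zero_apply]
  ext a
  rw [← sum_projL 𝒜 a, map_sum]
  refine Finset.sum_eq_zero fun i _ => ?_
  simpa using hom i (projL 𝒜 i a) (projL_mem 𝒜 i a)

end Stmt13Aux

theorem stmt13 {K A : Type*} [Field K] [CharZero K] [CommRing A] [Algebra K A]
    [Algebra.FiniteType K A] (𝒜 : ℤ → Submodule K A) [GradedAlgebra 𝒜]
    (h : ∃ D : Derivation K A A, IsLND D ∧ D ≠ 0) :
    ∃ (D : Derivation K A A) (d : ℤ), IsLND D ∧ D ≠ 0 ∧ IsHomogOfDeg 𝒜 D d := by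
  classical
  open Stmt13Aux DirectSum in
  obtain ⟨D, hLND, hD0⟩ := h
  obtain ⟨S, hS⟩ := (inferInstance : Algebra.FiniteType K A).out
  -- the set of degrees in which `D` has a nonzero component
  set Bad : Set ℤ := {d : ℤ | compL 𝒜 D d ≠ 0} with hBad
  -- the homogeneous generators
  set T : Set A :=
    ⋃ x ∈ (S : Set A), ⋃ i ∈ ((decompose 𝒜 x).support : Set ℤ), {projL 𝒜 i x} with hT
  have hT_top : Algebra.adjoin K T = ⊤ := by
    rw [eq_top_iff, ← hS]
    refine Algebra.adjoin_le fun x hx => ?_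
    rw [← sum_projL 𝒜 x]
    refine Subalgebra.sum_mem _ fun i hi => ?_
    refine Algebra.subset_adjoin ?_
    exact Set.mem_biUnion hx (Set.mem_biUnion (by simpa using hi) rfl)
  -- `Bad` is finite
  have hfin : Bad.Finite := by
    have hsub : Bad ⊆ ⋃ x ∈ (S : Set A), ⋃ i ∈ ((decompose 𝒜 x).support : Set ℤ),
        ((· - i) '' ((decompose 𝒜 (D (projL 𝒜 i x))).support : Set ℤ)) := by
      intro d hd
      by_contra hnot
      apply hd
      apply compL_eq_zero_of_compD
      refine Derivation.ext_of_adjoin_eq_top T hT_top fun g hg => ?_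
      simp only [hT, Set.mem_iUnion, Set.mem_singleton_iff] at hg
      obtain ⟨x, hxS, i, hisupp, rfl⟩ := hg
      show compL 𝒜 D d (projL 𝒜 i x) = 0
      rw [compL_of_mem 𝒜 D d (projL_mem 𝒜 i x), projL_apply]
      by_contra hne
      apply hnot
      refine Set.mem_biUnion hxS (Set.mem_biUnion hisupp ?_)
      refine ⟨i + d, ?_, by show i + d - i = d; omega⟩
      simp only [Finset.coe_sort_coe, Finset.mem_coe, DFinsupp.mem_support_iff]
      intro hzero
      apply hne
      rw [hzero, ZeroMemClass.coe_zero]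
    refine Set.Finite.subset ?_ hsub
    refine Set.Finite.biUnion (Finset.finite_toSet S) fun x _ => ?_
    refine Set.Finite.biUnion (Finset.finite_toSet _) fun i _ => ?_
    exact Set.Finite.image _ (Finset.finite_toSet _)
  -- `Bad` is nonempty
  have hne : Bad.Nonempty := by
    rcases Set.eq_empty_or_nonempty Bad with he | hne
    · exfalso
      apply hD0
      refine eq_zero_of_comps 𝒜 D fun d => ?_
      by_contra hc
      exact (Set.eq_empty_iff_forall_notMem.mp he d) hc
    · exact hne
  -- the top degree
  set s : ℤ := hfin.toFinset.max' (by simpa using hne) with hs_def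
  have hsBad : s ∈ Bad := by
    have := hfin.toFinset.max'_mem (by simpa using hne)
    simpa using this
  have hmax : ∀ d, s < d → compL 𝒜 D d = 0 := by
    intro d hd
    by_contra hc
    have hdB : d ∈ hfin.toFinset := by rw [Set.Finite.mem_toFinset]; exact hc
    exact absurd (hfin.toFinset.le_max' d hdB) (by omega)
  refine ⟨compD 𝒜 D s, s, ?_, ?_, ?_⟩
  · -- locally nilpotent
    intro a
    have hcomp : ∀ i : ℤ, ∃ n : ℕ, (⇑(compL 𝒜 D s))^[n] (projL 𝒜 i a) = 0 := by
      intro i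
      obtain ⟨n, _, hn⟩ := hLND (projL 𝒜 i a)
      refine ⟨n, ?_⟩
      have := (iterate_top 𝒜 D hmax (projL_mem 𝒜 i a) n).2
      rw [← this, hn, map_zero]
    choose f hf using hcomp
    set F := (decompose 𝒜 a).support with hF
    refine ⟨F.sup f + 1, by omega, ?_⟩
    have hiter : ∀ (n : ℕ) (x : A),
        (⇑(compD 𝒜 D s))^[n] x = ((compL 𝒜 D s) ^ n) x := by
      intro n x
      rw [Module.End.pow_apply]
      rfl
    rw [hiter]
    have hsum : a = ∑ i ∈ F, projL 𝒜 i a := (sum_projL 𝒜 a).symm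
    rw [hsum, map_sum]
    refine Finset.sum_eq_zero fun i hi => ?_
    rw [Module.End.pow_apply]
    have hle : f i ≤ F.sup f := Finset.le_sup hi
    have : F.sup f + 1 = (F.sup f + 1 - f i) + f i := by omega
    rw [this, Function.iterate_add_apply, hf i]
    exact Function.iterate_fixed (map_zero _) _
  · -- nonzero
    intro hzero
    exact hsBad (compL_eq_zero_of_compD 𝒜 D s hzero)
  · -- homogeneous of degree s
    intro i a ha
    rw [compD_apply, compL_of_mem 𝒜 D s ha]
    exact projL_mem 𝒜 (i + s) (D a)
end

section
/- Let K be a field of characteristic zero and B a commutative K-algebra that is an integral domain. Let I be the ideal of B generated by the union of the images ∂(B) over all LNDs ∂ of B. Then for every integer i ≥ 0 and every g ∈ I, the element g·u^i of the polynomial ring B[u] lies in HD*(B[u]). -/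
open Polynomial
noncomputable section
set_option linter.unusedSectionVars false
set_option maxHeartbeats 1000000

section LN
variable {K A : Type*} [CommRing K] [CommRing A] [Algebra K A] (d : Derivation K A A)

/-- Locally nilpotent at an element. -/
def LN (a : A) : Prop := ∃ N, (⇑d)^[N] a = 0

variable {d}

lemma iter_add (N : ℕ) (a b : A) : (⇑d)^[N] (a + b) = (⇑d)^[N] a + (⇑d)^[N] b := by
  induction N generalizing a b with
  | zero => rfl
  | succ N ih => simp only [Function.iterate_succ_apply, map_add, ih]

lemma iter_zero (N : ℕ) : (⇑d)^[N] (0 : A) = 0 := by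
  induction N with
  | zero => rfl
  | succ N ih => simp only [Function.iterate_succ_apply, map_zero, ih]

lemma iter_smul (N : ℕ) (k : K) (a : A) : (⇑d)^[N] (k • a) = k • (⇑d)^[N] a := by
  induction N generalizing a with
  | zero => rfl
  | succ N ih => simp only [Function.iterate_succ_apply, Derivation.map_smul, ih]

lemma iter_nsmul (N : ℕ) (k : ℕ) (a : A) : (⇑d)^[N] (k • a) = k • (⇑d)^[N] a := by
  induction N generalizing a with
  | zero => rfl
  | succ N ih =>
    have : d (k • a) = k • d a := by
      simpa using map_nsmul (d : A →ₗ[K] A) k a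
    simp only [Function.iterate_succ_apply, this, ih]

lemma LN_zero : LN d (0 : A) := ⟨0, rfl⟩

lemma LN_add {a b : A} (ha : LN d a) (hb : LN d b) : LN d (a + b) := by
  obtain ⟨M, hM⟩ := ha; obtain ⟨N, hN⟩ := hb
  refine ⟨max M N, ?_⟩
  have h1 : (⇑d)^[max M N] a = 0 := by
    rw [← Nat.sub_add_cancel (le_max_left M N), Function.iterate_add_apply, hM, iter_zero]
  have h2 : (⇑d)^[max M N] b = 0 := by
    rw [← Nat.sub_add_cancel (le_max_right M N), Function.iterate_add_apply, hN, iter_zero]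
  rw [iter_add, h1, h2, add_zero]

lemma LN_smul {a : A} (k : K) (ha : LN d a) : LN d (k • a) := by
  obtain ⟨N, hN⟩ := ha; exact ⟨N, by rw [iter_smul, hN, smul_zero]⟩

lemma LN_nsmul {a : A} (k : ℕ) (ha : LN d a) : LN d (k • a) := by
  obtain ⟨N, hN⟩ := ha; exact ⟨N, by rw [iter_nsmul, hN, smul_zero]⟩

lemma LN_of_d {a : A} (h : LN d (d a)) : LN d a := by
  obtain ⟨N, hN⟩ := h; exact ⟨N + 1, by rwa [Function.iterate_succ_apply]⟩

lemma LN_mul_aux : ∀ (s M N : ℕ) (a b : A), M + N ≤ s →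
    (⇑d)^[M] a = 0 → (⇑d)^[N] b = 0 → LN d (a * b) := by
  intro s
  induction s with
  | zero =>
    intro M N a b h hM hN
    obtain ⟨rfl, rfl⟩ : M = 0 ∧ N = 0 := by omega
    simp only [Function.iterate_zero_apply] at hM
    rw [hM, zero_mul]; exact LN_zero
  | succ s ih =>
    intro M N a b h hM hN
    match M, N with
    | 0, N =>
      simp only [Function.iterate_zero_apply] at hM
      rw [hM, zero_mul]; exact LN_zero
    | M + 1, 0 =>
      simp only [Function.iterate_zero_apply] at hN
      rw [hN, mul_zero]; exact LN_zero
    | M + 1, N + 1 =>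
      apply LN_of_d
      rw [Derivation.leibniz, smul_eq_mul, smul_eq_mul]
      apply LN_add
      · exact ih (M + 1) N a (d b) (by omega) hM
          (by rw [← Function.iterate_succ_apply]; exact hN)
      · exact ih (N + 1) M b (d a) (by omega) hN
          (by rw [← Function.iterate_succ_apply]; exact hM)

lemma LN_mul {a b : A} (ha : LN d a) (hb : LN d b) : LN d (a * b) := by
  obtain ⟨M, hM⟩ := ha; obtain ⟨N, hN⟩ := hb
  exact LN_mul_aux (M + N) M N a b le_rfl hM hN

lemma LN_pow {a : A} (ha : LN d a) (n : ℕ) : LN d (a ^ n) := by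
  induction n with
  | zero => exact ⟨1, by simpa using d.map_one_eq_zero⟩
  | succ n ih => rw [pow_succ]; exact LN_mul ih ha

end LN

section Poly
variable {K B : Type*} [Field K] [CharZero K] [CommRing B] [Algebra K B]

def Dtil (D : Derivation K B B) : Derivation K B[X] B[X] :=
  PolynomialModule.equivPolynomialSelf.compDer D.mapCoeffs

@[simp] lemma Dtil_monomial (D : Derivation K B B) (n : ℕ) (x : B) :
    Dtil D (monomial n x) = monomial n (D x) := by
  simp [Dtil]

@[simp] lemma Dtil_C (D : Derivation K B B) (x : B) :
    Dtil D (C x) = C (D x) := by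
  rw [← monomial_zero_left, Dtil_monomial, monomial_zero_left]

@[simp] lemma Dtil_X (D : Derivation K B B) : Dtil D X = 0 := by
  rw [← monomial_one_one_eq_X, Dtil_monomial, D.map_one_eq_zero, monomial_zero_right]

def delta : Derivation K B[X] B[X] := derivative'.restrictScalars K

@[simp] lemma delta_apply (f : B[X]) : (delta (K := K)) f = derivative f := rfl

lemma delta_LND : IsLND (delta (K := K) (B := B)) := by
  intro f
  refine ⟨f.natDegree + 1, le_add_self, ?_⟩
  have : ⇑(delta (K := K) (B := B)) = fun g => derivative g := rfl
  rw [this]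
  exact Polynomial.iterate_derivative_eq_zero (Nat.lt_succ_self _)

lemma C_mem_HDStar (b : B) : (C b : B[X]) ∈ HDStar K B[X] := by
  apply Algebra.subset_adjoin
  exact ⟨delta, delta_LND, ⟨X, by simp⟩, by simp⟩

def Delta (D : Derivation K B B) (j : ℕ) : Derivation K B[X] B[X] :=
  delta - (((j + 1 : ℕ) : B[X]) * X ^ j) • Dtil D

lemma Delta_apply (D : Derivation K B B) (j : ℕ) (f : B[X]) :
    Delta D j f = derivative f - ((j + 1 : ℕ) : B[X]) * X ^ j * Dtil D f := rfl

@[simp] lemma Delta_X (D : Derivation K B B) (j : ℕ) : Delta D j X = 1 := by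
  simp [Delta_apply]

lemma Delta_C (D : Derivation K B B) (j : ℕ) (b : B) :
    Delta D j (C b) = -((j + 1) • (X ^ j * C (D b))) := by
  simp [Delta_apply, nsmul_eq_mul]; ring

lemma LN_neg {A : Type*} [CommRing A] [Algebra K A] {d : Derivation K A A} {a : A}
    (h : LN d a) : LN d (-a) := by
  have := LN_smul (d := d) (-1 : K) h
  rwa [neg_one_smul] at this

lemma Delta_LN_X (D : Derivation K B B) (j : ℕ) : LN (Delta D j) (X : B[X]) := by
  refine ⟨2, ?_⟩
  have h1 : (Delta D j) X = 1 := Delta_X D j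
  show (Delta D j) ((Delta D j) X) = 0
  rw [h1]; exact (Delta D j).map_one_eq_zero

lemma Delta_LN_C (D : Derivation K B B) (j : ℕ) :
    ∀ (m : ℕ) (b : B), (⇑D)^[m] b = 0 → LN (Delta D j) (C b : B[X]) := by
  intro m
  induction m with
  | zero =>
    intro b hb
    simp only [Function.iterate_zero_apply] at hb
    rw [hb, map_zero]; exact LN_zero
  | succ m ih =>
    intro b hb
    apply LN_of_d
    rw [Delta_C]
    apply LN_neg
    apply LN_nsmul
    apply LN_mul (LN_pow (Delta_LN_X D j) j)
    exact ih (D b) (by rwa [← Function.iterate_succ_apply])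

lemma Delta_LND (D : Derivation K B B) (hD : IsLND D) (j : ℕ) : IsLND (Delta D j) := by
  have key : ∀ f : B[X], LN (Delta D j) f := by
    intro f
    induction f using Polynomial.induction_on' with
    | add p q hp hq => exact LN_add hp hq
    | monomial n b =>
      rw [← C_mul_X_pow_eq_monomial]
      obtain ⟨m, _, hm⟩ := hD b
      exact LN_mul (Delta_LN_C D j m b hm) (LN_pow (Delta_LN_X D j) n)
  intro f
  obtain ⟨N, hN⟩ := key f
  exact ⟨N + 1, by omega, by rw [Function.iterate_succ_apply', hN, map_zero]⟩

variable (D : Derivation K B B)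

def cseq (b : B) (n : ℕ) : B := ((Nat.factorial n : K))⁻¹ • (⇑D)^[n] b

@[simp] lemma cseq_zero (b : B) : cseq D b 0 = b := by simp [cseq]

lemma cseq_one (b : B) : cseq D b 1 = D b := by simp [cseq]

lemma cseq_eq_D_smul (b : B) (n : ℕ) :
    cseq D b (n + 1) = D ((Nat.factorial (n+1) : K)⁻¹ • (⇑D)^[n] b) := by
  rw [cseq, Derivation.map_smul, Function.iterate_succ_apply']

lemma cseq_succ (b : B) (n : ℕ) :
    (((n + 1) : ℕ) : B) * cseq D b (n + 1) = D (cseq D b n) := by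
  rw [cseq, cseq, Derivation.map_smul]
  rw [show D ((⇑D)^[n] b) = (⇑D)^[n+1] b from (Function.iterate_succ_apply' _ _ _).symm]
  rw [show ((n+1:ℕ):B) = algebraMap K B ((n+1:ℕ):K) by rw [map_natCast], ← Algebra.smul_def,
    smul_smul]
  congr 1
  have h0 : ((n+1:ℕ):K) ≠ 0 := Nat.cast_ne_zero.mpr (Nat.succ_ne_zero n)
  have h1 : ((Nat.factorial n : ℕ):K) ≠ 0 := Nat.cast_ne_zero.mpr (Nat.factorial_ne_zero n)
  rw [Nat.factorial_succ]
  push_cast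
  push_cast at h0
  rw [mul_inv, ← mul_assoc, mul_inv_cancel₀ h0, one_mul]

def Ff (b : B) (j n : ℕ) : B[X] :=
  C (((j + 1) : ℕ) : B) * X ^ j * (C (D (cseq D b n)) * X ^ ((j + 1) * n))

lemma Dtil_C_mul_X_pow (a : B) (s : ℕ) :
    Dtil D (C a * X ^ s) = C (D a) * X ^ s := by
  rw [Derivation.leibniz, Derivation.leibniz_pow, Dtil_X, Dtil_C]
  simp [smul_eq_mul]

lemma Delta_term_zero (b : B) (j : ℕ) :
    Delta D j (C (cseq D b 0) * X ^ ((j + 1) * 0)) = -Ff D b j 0 := by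
  simp only [cseq_zero, Nat.mul_zero, pow_zero, mul_one, Ff]
  rw [Delta_apply, Dtil_C, derivative_C, map_natCast C (j+1)]
  ring

lemma Delta_term_succ (b : B) (j n : ℕ) :
    Delta D j (C (cseq D b (n + 1)) * X ^ ((j + 1) * (n + 1))) =
      Ff D b j n - Ff D b j (n + 1) := by
  have e1 : (j + 1) * (n + 1) - 1 = j + (j + 1) * n := by
    have : (j + 1) * (n + 1) = ((j + 1) * n + j) + 1 := by ring
    omega
  have hc : ((((j + 1) * (n + 1) : ℕ)) : B) * cseq D b (n + 1)
      = ((j + 1 : ℕ) : B) * D (cseq D b n) := by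
    rw [← cseq_succ]; push_cast; ring
  have hC : C ((((j + 1) * (n + 1) : ℕ)) : B) * C (cseq D b (n + 1))
      = C ((j + 1 : ℕ) : B) * C (D (cseq D b n)) := by
    rw [← map_mul, ← map_mul, hc]
  rw [Delta_apply, derivative_C_mul, derivative_X_pow, Dtil_C_mul_X_pow, e1,
    ← map_natCast C (j+1), Ff, Ff]
  linear_combination (X : B[X]) ^ (j + (j + 1) * n) * hC

lemma Delta_F (b : B) (m j : ℕ) (hb : (⇑D)^[m] b = 0) :
    Delta D j (∑ n ∈ Finset.range (m + 1), C (cseq D b n) * X ^ ((j + 1) * n)) = 0 := by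
  have hm : cseq D b m = 0 := by rw [cseq, hb, smul_zero]
  rw [map_sum, Finset.sum_range_succ']
  rw [Finset.sum_congr rfl fun n _ => Delta_term_succ D b j n, Delta_term_zero,
    Finset.sum_range_sub']
  have : Ff D b j m = 0 := by rw [Ff, hm, map_zero, map_zero, zero_mul, mul_zero]
  rw [this]; ring

lemma CD_mem (D : Derivation K B B) (hD : IsLND D) :
    ∀ (m : ℕ) (b : B), (⇑D)^[m] b = 0 → ∀ j : ℕ,
      C (D b) * X ^ (j + 1) ∈ HDStar K B[X] := by
  intro m
  induction m using Nat.strong_induction_on with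
  | _ m ih =>
    intro b hb j
    match m with
    | 0 =>
      simp only [Function.iterate_zero_apply] at hb
      rw [hb, map_zero, map_zero, zero_mul]
      exact zero_mem _
    | 1 =>
      simp only [Function.iterate_one] at hb
      rw [hb, map_zero, zero_mul]
      exact zero_mem _
    | m + 2 =>
      set term : ℕ → B[X] := fun n => C (cseq D b n) * X ^ ((j + 1) * n) with hterm
      set F : B[X] := ∑ n ∈ Finset.range (m + 3), term n with hF
      have hFmem : F ∈ HDStar K B[X] := by
        apply Algebra.subset_adjoin
        exact ⟨Delta D j, Delta_LND D hD j, ⟨X, Delta_X D j⟩, Delta_F D b (m + 2) j hb⟩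
      have hsplit : F = term 0 + term 1 + ∑ n ∈ Finset.Ico 2 (m + 3), term n := by
        rw [hF, Finset.range_eq_Ico,
          ← Finset.sum_Ico_consecutive _ (by omega : (0:ℕ) ≤ 2) (by omega : 2 ≤ m + 3),
          ← Finset.range_eq_Ico, Finset.sum_range_succ, Finset.sum_range_one]
      have hSmem : (∑ n ∈ Finset.Ico 2 (m + 3), term n) ∈ HDStar K B[X] := by
        apply Subalgebra.sum_mem
        intro n hn
        rw [Finset.mem_Ico] at hn
        obtain ⟨k, rfl⟩ : ∃ k, n = k + 2 := ⟨n - 2, by omega⟩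
        have hpos : 0 < (j + 1) * (k + 2) := Nat.mul_pos (by omega) (by omega)
        have hexp : (j + 1) * (k + 2) = ((j + 1) * (k + 2) - 1) + 1 := by omega
        have hcs : cseq D b (k + 2) = D ((Nat.factorial (k + 2) : K)⁻¹ • (⇑D)^[k + 1] b) :=
          cseq_eq_D_smul D b (k + 1)
        have hb' : (⇑D)^[m + 1 - k] ((Nat.factorial (k + 2) : K)⁻¹ • (⇑D)^[k + 1] b) = 0 := by
          rw [iter_smul, ← Function.iterate_add_apply,
            show m + 1 - k + (k + 1) = m + 2 by omega, hb, smul_zero]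
        have := ih (m + 1 - k) (by omega) _ hb' ((j + 1) * (k + 2) - 1)
        rw [hterm]
        simp only []
        rw [hcs, hexp]
        exact this
      have key : term 1 = F - term 0 - ∑ n ∈ Finset.Ico 2 (m + 3), term n := by
        rw [hsplit]; ring
      have h0 : term 0 = C b := by simp [hterm]
      have h1 : term 1 = C (D b) * X ^ (j + 1) := by
        rw [hterm]; simp only [cseq_one, mul_one]
      rw [← h1, key, h0]
      exact sub_mem (sub_mem hFmem (C_mem_HDStar b)) hSmem

end Poly

theorem stmt16 {K B : Type*} [Field K] [CharZero K]
    [CommRing B] [IsDomain B] [Algebra K B] :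
    ∀ i : ℕ, ∀ g ∈ Ideal.span {b : B | ∃ D : Derivation K B B, IsLND D ∧ b ∈ Set.range D},
      (Polynomial.C g * Polynomial.X ^ i : Polynomial B) ∈ HDStar K (Polynomial B) := by
  intro i g hg
  induction hg using Submodule.span_induction with
  | mem b hb =>
    obtain ⟨D, hD, a, rfl⟩ := hb
    match i with
    | 0 => rw [pow_zero, mul_one]; exact C_mem_HDStar (D a)
    | j + 1 =>
      obtain ⟨m, -, hm⟩ := hD a
      exact CD_mem D hD m a hm j
  | zero => rw [map_zero, zero_mul]; exact zero_mem _
  | add x y _ _ hx hy => rw [map_add, add_mul]; exact add_mem hx hy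
  | smul b x _ hx =>
    rw [smul_eq_mul, map_mul, mul_assoc]
    exact mul_mem (C_mem_HDStar b) hx
end
end

section
/- Let K be an algebraically closed field of characteristic zero, n ≥ 1 an integer, and f ∈ K[z] a nonconstant polynomial with no repeated roots (f is squarefree). Let B = K[x,y,z]/(x^n y − f(z)) be the coordinate ring of the Danielewski surface. Then the ideal of B generated by the union of the images ∂(B) over all LNDs ∂ of B equals B, and consequently HD*(B[u]) = B[u]. -/
set_option linter.unusedSectionVars false
set_option linter.unnecessarySimpa false
set_option linter.unusedVariables false
set_option synthInstance.maxHeartbeats 1000000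
set_option maxHeartbeats 1000000



/-- The defining ideal of the Danielewski surface `x^n y = f(z)` inside `K[x,y,z]`,
with `x = X 0`, `y = X 1`, `z = X 2`. -/
noncomputable def DanielewskiIdeal (K : Type*) [Field K] (n : ℕ) (f : Polynomial K) :
    Ideal (MvPolynomial (Fin 3) K) :=
  Ideal.span {MvPolynomial.X 0 ^ n * MvPolynomial.X 1 - Polynomial.aeval (MvPolynomial.X 2) f}




section DNilGeneric

variable {K A : Type*} [CommRing K] [CommRing A] [Algebra K A]

/-- `a` is annihilated by some iterate of `D`. -/
def DNil (D : Derivation K A A) (a : A) : Prop := ∃ k : ℕ, (⇑D)^[k] a = 0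

variable (D : Derivation K A A)

lemma iterD_zero (k : ℕ) : (⇑D)^[k] (0 : A) = 0 := by
  induction k with
  | zero => rfl
  | succ k ih => rw [Function.iterate_succ_apply, map_zero]; exact ih

lemma iterD_add (k : ℕ) (a b : A) : (⇑D)^[k] (a + b) = (⇑D)^[k] a + (⇑D)^[k] b := by
  induction k generalizing a b with
  | zero => rfl
  | succ k ih =>
    rw [Function.iterate_succ_apply, map_add, ih, Function.iterate_succ_apply,
      Function.iterate_succ_apply]

lemma iterD_nil_le {k : ℕ} {a : A} (h : (⇑D)^[k] a = 0) {m : ℕ} (hm : k ≤ m) :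
    (⇑D)^[m] a = 0 := by
  obtain ⟨j, rfl⟩ := Nat.exists_eq_add_of_le hm
  rw [Nat.add_comm, Function.iterate_add_apply, h, iterD_zero]

lemma dnil_zero : DNil D (0 : A) := ⟨0, rfl⟩

lemma dnil_one : DNil D (1 : A) := ⟨1, D.map_one_eq_zero⟩

lemma dnil_algebraMap (c : K) : DNil D (algebraMap K A c) := ⟨1, by
  simpa using D.map_algebraMap c⟩

lemma dnil_add {a b : A} : DNil D a → DNil D b → DNil D (a + b) := by
  rintro ⟨k, hk⟩ ⟨m, hm⟩
  exact ⟨max k m, by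
    rw [iterD_add, iterD_nil_le D hk (le_max_left _ _), iterD_nil_le D hm (le_max_right _ _),
      add_zero]⟩

lemma dnil_smul {a : A} (c : K) : DNil D a → DNil D (c • a) := by
  rintro ⟨k, hk⟩
  refine ⟨k, ?_⟩
  have : ∀ m (x : A), (⇑D)^[m] (c • x) = c • (⇑D)^[m] x := by
    intro m
    induction m with
    | zero => intro x; rfl
    | succ m ih =>
      intro x
      rw [Function.iterate_succ_apply, D.map_smul, ih, Function.iterate_succ_apply]
  rw [this, hk, smul_zero]

private lemma dnil_mul_aux : ∀ s p q : ℕ, ∀ a b : A, p + q ≤ s →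
    (⇑D)^[p] a = 0 → (⇑D)^[q] b = 0 → (⇑D)^[p + q] (a * b) = 0 := by
  intro s
  induction s with
  | zero =>
    intro p q a b hpq ha hb
    have hp : p = 0 := by omega
    have hq : q = 0 := by omega
    subst hp; subst hq
    simp only [Function.iterate_zero, id] at ha hb ⊢
    rw [ha, zero_mul, iterD_zero]
  | succ s ih =>
    intro p q a b hpq ha hb
    match p, q with
    | 0, q =>
      simp only [Function.iterate_zero, id] at ha
      rw [ha, zero_mul, zero_add, iterD_zero]
    | p + 1, 0 =>
      simp only [Function.iterate_zero, id] at hb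
      rw [hb, mul_zero, iterD_zero]
    | p + 1, q + 1 =>
      have hstep : (p + 1) + (q + 1) = ((p + 1) + q) + 1 := by omega
      rw [hstep, Function.iterate_succ_apply, D.leibniz, smul_eq_mul, smul_eq_mul, iterD_add]
      have h1 : (⇑D)^[(p + 1) + q] (a * D b) = 0 := by
        refine ih (p + 1) q a (D b) (by omega) ha ?_
        rw [← Function.iterate_succ_apply]; exact hb
      have h2 : (⇑D)^[(q + 1) + p] (b * D a) = 0 := by
        refine ih (q + 1) p b (D a) (by omega) hb ?_
        rw [← Function.iterate_succ_apply]; exact ha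
      rw [h1, show (p+1)+q = (q+1)+p from by omega, h2, add_zero]

lemma dnil_mul {a b : A} : DNil D a → DNil D b → DNil D (a * b) := by
  rintro ⟨k, hk⟩ ⟨m, hm⟩
  exact ⟨k + m, dnil_mul_aux D (k + m) k m a b le_rfl hk hm⟩

lemma dnil_pow {a : A} (h : DNil D a) (m : ℕ) : DNil D (a ^ m) := by
  induction m with
  | zero => simpa using dnil_one D
  | succ m ih => rw [pow_succ]; exact dnil_mul D ih h

lemma dnil_of_D {a : A} (h : DNil D (D a)) : DNil D a := by
  obtain ⟨k, hk⟩ := h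
  exact ⟨k + 1, by rw [Function.iterate_succ_apply]; exact hk⟩

lemma isLND_of_dnil (h : ∀ a : A, DNil D a) : IsLND D := by
  intro a
  obtain ⟨k, hk⟩ := h a
  exact ⟨k + 1, le_add_self, iterD_nil_le D hk (Nat.le_succ k)⟩

end DNilGeneric


section Danielewski

open MvPolynomial

variable (K : Type*) [Field K] [CharZero K] (n : ℕ) (f : Polynomial K)

local notation "R" => MvPolynomial (Fin 3) K

/-- The triangular derivation `x = X 0 ↦ 0`, `y = X 1 ↦ f'(z)`, `z = X 2 ↦ x^n`. -/
noncomputable def dR : Derivation K R R :=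
  MvPolynomial.mkDerivation K
    ![0, Polynomial.aeval (MvPolynomial.X 2) (Polynomial.derivative f), MvPolynomial.X 0 ^ n]

lemma dR_X0 : dR K n f (MvPolynomial.X 0) = 0 := by
  rw [dR, MvPolynomial.mkDerivation_X]; rfl

lemma dR_X1 : dR K n f (MvPolynomial.X 1)
    = Polynomial.aeval (MvPolynomial.X 2) (Polynomial.derivative f) := by
  rw [dR, MvPolynomial.mkDerivation_X]; rfl

lemma dR_X2 : dR K n f (MvPolynomial.X 2) = MvPolynomial.X 0 ^ n := by
  rw [dR, MvPolynomial.mkDerivation_X]; rfl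

lemma dR_X0_pow (m : ℕ) : dR K n f (MvPolynomial.X 0 ^ m) = 0 := by
  rw [Derivation.leibniz_pow, dR_X0, smul_zero, smul_zero]

lemma dR_aeval (g : Polynomial K) :
    dR K n f (Polynomial.aeval (MvPolynomial.X 2) g)
      = Polynomial.aeval (MvPolynomial.X 2) (Polynomial.derivative g) * MvPolynomial.X 0 ^ n := by
  rw [Derivation.comp_aeval_eq, dR_X2, smul_eq_mul]

lemma dR_rel : dR K n f (MvPolynomial.X 0 ^ n * MvPolynomial.X 1
    - Polynomial.aeval (MvPolynomial.X 2) f) = 0 := by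
  rw [map_sub, Derivation.leibniz, dR_X0_pow, dR_X1, dR_aeval, smul_zero, add_zero,
    smul_eq_mul, mul_comm, sub_self]


lemma dR_mem_ideal {p : R} (hp : p ∈ DanielewskiIdeal K n f) :
    dR K n f p ∈ DanielewskiIdeal K n f := by
  rw [DanielewskiIdeal, Ideal.mem_span_singleton'] at hp ⊢
  obtain ⟨c, rfl⟩ := hp
  refine ⟨dR K n f c, ?_⟩
  rw [Derivation.leibniz, dR_rel, smul_zero, zero_add, smul_eq_mul, mul_comm]

lemma dnil_dR_aeval (g : Polynomial K) :
    DNil (dR K n f) (Polynomial.aeval (MvPolynomial.X 2) g) := by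
  have hX2 : DNil (dR K n f) (MvPolynomial.X 2) := by
    refine ⟨2, ?_⟩
    show dR K n f (dR K n f (MvPolynomial.X 2)) = 0
    rw [dR_X2, dR_X0_pow]
  induction g using Polynomial.induction_on with
  | C a => rw [Polynomial.aeval_C]; exact dnil_algebraMap _ a
  | add p q hp hq => rw [map_add]; exact dnil_add _ hp hq
  | monomial m a ih =>
    rw [pow_succ, ← mul_assoc, map_mul]
    exact dnil_mul _ ih (by simpa using hX2)

lemma dnil_dR (p : R) : DNil (dR K n f) p := by
  induction p using MvPolynomial.induction_on with
  | C a => rw [← MvPolynomial.algebraMap_eq]; exact dnil_algebraMap _ a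
  | add p q hp hq => exact dnil_add _ hp hq
  | mul_X p i ih =>
    refine dnil_mul _ ih ?_
    fin_cases i
    · exact ⟨1, by simpa using dR_X0 K n f⟩
    · refine dnil_of_D _ ?_
      show DNil (dR K n f) (dR K n f (MvPolynomial.X 1))
      rw [dR_X1]
      exact dnil_dR_aeval K n f _
    · refine dnil_of_D _ ?_
      show DNil (dR K n f) (dR K n f (MvPolynomial.X 2))
      rw [dR_X2]
      exact dnil_pow _ ⟨1, by simpa using dR_X0 K n f⟩ n

local notation "B" => R ⧸ DanielewskiIdeal K n f

/-- The induced derivation on the quotient. -/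
noncomputable def DBlin : B →ₗ[K] B :=
  (Submodule.liftQ ((DanielewskiIdeal K n f).restrictScalars K)
      ((Ideal.Quotient.mkₐ K (DanielewskiIdeal K n f)).toLinearMap.comp (dR K n f).toLinearMap)
      (fun x hx => by
        simp only [LinearMap.mem_ker, LinearMap.coe_comp, Function.comp_apply,
          AlgHom.toLinearMap_apply, Ideal.Quotient.mkₐ_eq_mk, Derivation.coeFn_coe]
        exact Ideal.Quotient.eq_zero_iff_mem.mpr (dR_mem_ideal K n f hx))).comp
    (Submodule.Quotient.restrictScalarsEquiv K (DanielewskiIdeal K n f)).symm.toLinearMap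

lemma DBlin_mk (p : R) :
    DBlin K n f (Ideal.Quotient.mk (DanielewskiIdeal K n f) p)
      = Ideal.Quotient.mk (DanielewskiIdeal K n f) (dR K n f p) := by
  rfl

noncomputable def DB : Derivation K B B where
  toLinearMap := DBlin K n f
  map_one_eq_zero' := by
    show DBlin K n f (Ideal.Quotient.mk (DanielewskiIdeal K n f) 1) = 0
    rw [DBlin_mk, Derivation.map_one_eq_zero, map_zero]
  leibniz' := by
    intro a b
    obtain ⟨p, rfl⟩ := Ideal.Quotient.mk_surjective a
    obtain ⟨q, rfl⟩ := Ideal.Quotient.mk_surjective b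
    show DBlin K n f (Ideal.Quotient.mk _ p * Ideal.Quotient.mk _ q) = _
    rw [← map_mul, DBlin_mk, Derivation.leibniz, smul_eq_mul, smul_eq_mul, map_add, map_mul,
      map_mul]
    show _ = Ideal.Quotient.mk _ p • DBlin K n f (Ideal.Quotient.mk _ q)
      + Ideal.Quotient.mk _ q • DBlin K n f (Ideal.Quotient.mk _ p)
    rw [DBlin_mk, DBlin_mk, smul_eq_mul, smul_eq_mul]

lemma DB_mk (p : R) :
    DB K n f (Ideal.Quotient.mk (DanielewskiIdeal K n f) p)
      = Ideal.Quotient.mk (DanielewskiIdeal K n f) (dR K n f p) := rfl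

lemma DB_iter (k : ℕ) (p : R) :
    (⇑(DB K n f))^[k] (Ideal.Quotient.mk (DanielewskiIdeal K n f) p)
      = Ideal.Quotient.mk (DanielewskiIdeal K n f) ((⇑(dR K n f))^[k] p) := by
  induction k generalizing p with
  | zero => rfl
  | succ k ih =>
    rw [Function.iterate_succ_apply, Function.iterate_succ_apply, DB_mk, ih]

lemma dnil_DB (b : B) : DNil (DB K n f) b := by
  obtain ⟨p, rfl⟩ := Ideal.Quotient.mk_surjective b
  obtain ⟨k, hk⟩ := dnil_dR K n f p
  exact ⟨k, by rw [DB_iter, hk, map_zero]⟩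

lemma isLND_DB : IsLND (DB K n f) := isLND_of_dnil _ (dnil_DB K n f)


lemma mk_aeval_f :
    Ideal.Quotient.mk (DanielewskiIdeal K n f) (Polynomial.aeval (MvPolynomial.X 2) f)
      = Ideal.Quotient.mk (DanielewskiIdeal K n f) (MvPolynomial.X 0 ^ n)
        * Ideal.Quotient.mk (DanielewskiIdeal K n f) (MvPolynomial.X 1) := by
  rw [← map_mul]
  rw [Ideal.Quotient.mk_eq_mk_iff_sub_mem]
  refine neg_mem_iff.mp ?_
  rw [neg_sub]
  exact Ideal.subset_span rfl

lemma part1 (hsq : Squarefree f) :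
    Ideal.span {b : B |
      ∃ D : Derivation K B B, IsLND D ∧ b ∈ Set.range D} = ⊤ := by
  rw [Ideal.eq_top_iff_one]
  have hsep : f.Separable := PerfectField.separable_iff_squarefree.mpr hsq
  obtain ⟨a, b, hab⟩ := hsep
  set mkq := Ideal.Quotient.mk (DanielewskiIdeal K n f) with hmkq
  have h1 : mkq (Polynomial.aeval (MvPolynomial.X 2) a)
        * mkq (Polynomial.aeval (MvPolynomial.X 2) f)
      + mkq (Polynomial.aeval (MvPolynomial.X 2) b)
        * mkq (Polynomial.aeval (MvPolynomial.X 2) (Polynomial.derivative f)) = 1 := by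
    have := congrArg (fun t => mkq (Polynomial.aeval (MvPolynomial.X 2) t)) hab
    simpa using this
  have hx : mkq (MvPolynomial.X 0 ^ n)
      ∈ Ideal.span {b : B | ∃ D : Derivation K B B, IsLND D ∧ b ∈ Set.range D} := by
    refine Ideal.subset_span ⟨DB K n f, isLND_DB K n f, ⟨mkq (MvPolynomial.X 2), ?_⟩⟩
    rw [hmkq, DB_mk, dR_X2]
  have hf' : mkq (Polynomial.aeval (MvPolynomial.X 2) (Polynomial.derivative f))
      ∈ Ideal.span {b : B | ∃ D : Derivation K B B, IsLND D ∧ b ∈ Set.range D} := by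
    refine Ideal.subset_span ⟨DB K n f, isLND_DB K n f, ⟨mkq (MvPolynomial.X 1), ?_⟩⟩
    rw [hmkq, DB_mk, dR_X1]
  rw [← h1]
  refine add_mem ?_ (Ideal.mul_mem_left _ _ hf')
  rw [mk_aeval_f]
  rw [show mkq (Polynomial.aeval (MvPolynomial.X 2) a) * (mkq (MvPolynomial.X 0 ^ n) * mkq (MvPolynomial.X 1))
      = mkq (Polynomial.aeval (MvPolynomial.X 2) a) * mkq (MvPolynomial.X 1) * mkq (MvPolynomial.X 0 ^ n) from by ring]
  exact Ideal.mul_mem_left _ _ hx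

end Danielewski

section PolyDerivations

open Polynomial

variable {K A : Type*} [CommRing K] [CommRing A] [Algebra K A]

/-- `Polynomial A ≃ (ℕ →₀ A)` as `K`-modules. -/
noncomputable def polyFinsuppEquiv : Polynomial A ≃ₗ[K] (ℕ →₀ A) where
  toFun := fun p => p.toFinsupp.coeff
  invFun := fun q => Polynomial.ofFinsupp (AddMonoidAlgebra.ofCoeff q)
  left_inv := fun ⟨p⟩ => rfl
  right_inv := fun p => rfl
  map_add' := fun p q => by rw [Polynomial.toFinsupp_add]; rfl
  map_smul' := fun c p => by rw [Polynomial.toFinsupp_smul]; rfl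

/-- Coefficientwise application of a derivation, as a linear map. -/
noncomputable def hatLin (D : Derivation K A A) : Polynomial A →ₗ[K] Polynomial A :=
  (((polyFinsuppEquiv (K := K) (A := A)).symm.toLinearMap).comp
      (Finsupp.mapRange.linearMap (D : A →ₗ[K] A))).comp
    (polyFinsuppEquiv (K := K) (A := A)).toLinearMap

lemma coeff_hatLin (D : Derivation K A A) (p : Polynomial A) (k : ℕ) :
    (hatLin D p).coeff k = D (p.coeff k) := by
  rcases p with ⟨⟨q⟩⟩
  show (Polynomial.ofFinsupp (AddMonoidAlgebra.ofCoeff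
    (Finsupp.mapRange.linearMap (D : A →ₗ[K] A) q))).coeff k = _
  rw [Polynomial.coeff_ofFinsupp, AddMonoidAlgebra.coeff_ofCoeff, Finsupp.mapRange.linearMap_apply, Finsupp.mapRange_apply]
  rfl

/-- Coefficientwise application of a derivation, as a derivation. -/
noncomputable def hatD (D : Derivation K A A) : Derivation K (Polynomial A) (Polynomial A) where
  toLinearMap := hatLin D
  map_one_eq_zero' := by
    ext k
    rw [coeff_hatLin, Polynomial.coeff_one]
    rcases eq_or_ne k 0 with h | h <;>
      simp [h, Derivation.map_one_eq_zero]
  leibniz' := by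
    intro p q
    ext k
    show (hatLin D (p * q)).coeff k = _
    rw [coeff_hatLin, Polynomial.coeff_mul]
    rw [map_sum]
    have hterm : ∀ x ∈ Finset.HasAntidiagonal.antidiagonal k,
        D (p.coeff x.1 * q.coeff x.2)
          = p.coeff x.1 * D (q.coeff x.2) + q.coeff x.2 * D (p.coeff x.1) := by
      intro x _
      rw [Derivation.leibniz, smul_eq_mul, smul_eq_mul]
    rw [Finset.sum_congr rfl hterm, Finset.sum_add_distrib]
    have swap : ∑ x ∈ Finset.HasAntidiagonal.antidiagonal k, q.coeff x.2 * D (p.coeff x.1)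
        = ∑ x ∈ Finset.HasAntidiagonal.antidiagonal k, q.coeff x.1 * D (p.coeff x.2) := by
      have := Finset.Nat.sum_antidiagonal_swap
        (n := k) (f := fun x : ℕ × ℕ => q.coeff x.1 * D (p.coeff x.2))
      simpa using this
    rw [swap]
    show _ = (p • hatLin D q + q • hatLin D p).coeff k
    rw [Polynomial.coeff_add, smul_eq_mul, smul_eq_mul, Polynomial.coeff_mul,
      Polynomial.coeff_mul]
    simp only [coeff_hatLin]

lemma hatD_apply_coeff (D : Derivation K A A) (p : Polynomial A) (k : ℕ) :
    (hatD D p).coeff k = D (p.coeff k) := coeff_hatLin D p k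

lemma hatD_C (D : Derivation K A A) (a : A) :
    hatD D (Polynomial.C a) = Polynomial.C (D a) := by
  ext k
  rw [hatD_apply_coeff, Polynomial.coeff_C, Polynomial.coeff_C]
  rcases eq_or_ne k 0 with h | h <;> simp [h]

lemma hatD_X (D : Derivation K A A) : hatD D (Polynomial.X : Polynomial A) = 0 := by
  ext k
  rw [hatD_apply_coeff, Polynomial.coeff_X]
  rcases eq_or_ne k 1 with h | h <;> simp [h, eq_comm, Derivation.map_one_eq_zero]

lemma hatD_C_mul_X_pow (D : Derivation K A A) (a : A) (m : ℕ) :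
    hatD D (Polynomial.C a * Polynomial.X ^ m) = Polynomial.C (D a) * Polynomial.X ^ m := by
  rw [Derivation.leibniz, Derivation.leibniz_pow, hatD_X, hatD_C]
  simp only [smul_zero, zero_add, smul_eq_mul]
  ring

/-- `d/du` as a `K`-derivation. -/
noncomputable def derK : Derivation K (Polynomial A) (Polynomial A) where
  toLinearMap := (Polynomial.derivative (R := A)).restrictScalars K
  map_one_eq_zero' := Polynomial.derivative_one
  leibniz' := by
    intro p q
    show Polynomial.derivative (p * q)
      = p * Polynomial.derivative q + q * Polynomial.derivative p
    rw [Polynomial.derivative_mul]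
    ring

lemma derK_apply (p : Polynomial A) : derK (K := K) p = Polynomial.derivative p := rfl

/-- The family of derivations `c • hatD D + d/du`. -/
noncomputable def deltaD (D : Derivation K A A) (c : Polynomial A) :
    Derivation K (Polynomial A) (Polynomial A) :=
  c • hatD D + derK

lemma deltaD_apply (D : Derivation K A A) (c p : Polynomial A) :
    deltaD D c p = c * hatD D p + Polynomial.derivative p := rfl

end PolyDerivations

section PolyLND

open Polynomial

variable {K A : Type*} [CommRing K] [CommRing A] [Algebra K A]

lemma derK_C (a : A) : derK (K := K) (Polynomial.C a) = 0 := Polynomial.derivative_C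

lemma derK_X : derK (K := K) (A := A) Polynomial.X = 1 := Polynomial.derivative_X

lemma dnil_derK (p : Polynomial A) : DNil (derK (K := K) (A := A)) p := by
  induction p using Polynomial.induction_on with
  | C a => exact dnil_of_D _ (by rw [derK_C]; exact dnil_zero _)
  | add p q hp hq => exact dnil_add _ hp hq
  | monomial m a ih =>
    rw [pow_succ, ← mul_assoc]
    exact dnil_mul _ ih (dnil_of_D _ (by rw [derK_X]; exact dnil_one _))

lemma isLND_derK : IsLND (derK (K := K) (A := A)) := isLND_of_dnil _ dnil_derK

variable (D : Derivation K A A)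

lemma deltaD_C (c : Polynomial A) (a : A) :
    deltaD D c (Polynomial.C a) = c * Polynomial.C (D a) := by
  rw [deltaD_apply, hatD_C, Polynomial.derivative_C, add_zero]

lemma deltaD_X (c : Polynomial A) : deltaD D c Polynomial.X = 1 := by
  rw [deltaD_apply, hatD_X, mul_zero, zero_add, Polynomial.derivative_X]

lemma dnil_deltaD_Xpow (c : Polynomial A) (m : ℕ) :
    DNil (deltaD D c) (Polynomial.X ^ m) :=
  dnil_pow _ (dnil_of_D _ (by rw [deltaD_X]; exact dnil_one _)) m

lemma dnil_deltaD_C (j : ℕ) {a : A} (ha : DNil D a) :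
    DNil (deltaD D (Polynomial.X ^ j)) (Polynomial.C a) := by
  obtain ⟨k, hk⟩ := ha
  induction k generalizing a with
  | zero =>
    simp only [Function.iterate_zero, id] at hk
    rw [hk, Polynomial.C_0]
    exact dnil_zero _
  | succ k ih =>
    refine dnil_of_D _ ?_
    rw [deltaD_C]
    refine dnil_mul _ (dnil_deltaD_Xpow D _ j) (ih ?_)
    rw [← Function.iterate_succ_apply]
    exact hk

lemma dnil_deltaD (hD : ∀ b : A, DNil D b) (j : ℕ) (p : Polynomial A) :
    DNil (deltaD D (Polynomial.X ^ j)) p := by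
  induction p using Polynomial.induction_on with
  | C a => exact dnil_deltaD_C D j (hD a)
  | add p q hp hq => exact dnil_add _ hp hq
  | monomial m a ih =>
    rw [pow_succ, ← mul_assoc]
    exact dnil_mul _ ih (dnil_of_D _ (by rw [deltaD_X]; exact dnil_one _))

lemma isLND_deltaD (hD : ∀ b : A, DNil D b) (j : ℕ) :
    IsLND (deltaD D (Polynomial.X ^ j)) := isLND_of_dnil _ (dnil_deltaD D hD j)

end PolyLND

section PolyHelpers

open Polynomial

variable {K A : Type*} [CommRing K] [CommRing A] [Algebra K A] (D : Derivation K A A)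

lemma deltaD_CXpow (c : Polynomial A) (a : A) (m : ℕ) :
    deltaD D c (Polynomial.C a * Polynomial.X ^ m)
      = c * (Polynomial.C (D a) * Polynomial.X ^ m)
        + Polynomial.C (a * m) * Polynomial.X ^ (m - 1) := by
  rw [deltaD_apply, hatD_C_mul_X_pow, Polynomial.derivative_C_mul_X_pow]

lemma cast_mul_helper (a : A) (m k : ℕ) :
    Polynomial.C (a * (m : A)) * Polynomial.X ^ k
      = ((m : K)) • (Polynomial.C a * Polynomial.X ^ k) := by
  have h : ((m : K)) • (Polynomial.C a * Polynomial.X ^ k)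
      = ((m : Polynomial A)) * (Polynomial.C a * Polynomial.X ^ k) := by
    rw [Algebra.smul_def, map_natCast]
  rw [h, map_mul, map_natCast]
  ring

end PolyHelpers

section Taylor

open Polynomial

variable {K A : Type*} [Field K] [CharZero K] [CommRing A] [Algebra K A] (D : Derivation K A A)

/-- Taylor coefficients `(-1)^i / i!`. -/
noncomputable def tayC (K : Type*) [Field K] (i : ℕ) : K := (-1) ^ i * ((i.factorial : K))⁻¹

lemma tayC_zero : tayC K 0 = 1 := by simp [tayC]

lemma tayC_one : tayC K 1 = -1 := by simp [tayC]

lemma tayC_succ_mul (m : ℕ) : tayC K (m + 1) * (((m + 1 : ℕ)) : K) = - tayC K m := by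
  rw [tayC, tayC, Nat.factorial_succ]
  have h1 : ((m.factorial : K)) ≠ 0 := Nat.cast_ne_zero.mpr (Nat.factorial_ne_zero m)
  have h2 : (((m + 1 : ℕ)) : K) ≠ 0 := Nat.cast_ne_zero.mpr (Nat.succ_ne_zero m)
  push_cast at h2 ⊢
  field_simp
  ring

/-- The Taylor/Dixmier series attached to `y`. -/
noncomputable def tayE (y : A) (m : ℕ) : Polynomial A :=
  ∑ i ∈ Finset.range m, tayC K i • (Polynomial.C ((⇑D)^[i] y) * Polynomial.X ^ i)

lemma deltaD_tayE (y : A) (m : ℕ) :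
    deltaD D ((Polynomial.X : Polynomial A) ^ 0) (tayE D y (m + 1))
      = tayC K m • (Polynomial.C ((⇑D)^[m + 1] y) * Polynomial.X ^ m) := by
  induction m with
  | zero =>
    rw [tayE, Finset.sum_range_one, Derivation.map_smul, deltaD_CXpow]
    simp [Derivation.map_smul]
  | succ m ih =>
    rw [tayE, Finset.sum_range_succ, Derivation.map_add, ← tayE, ih, Derivation.map_smul,
      deltaD_CXpow, pow_zero, one_mul, Nat.add_sub_cancel]
    rw [smul_add, cast_mul_helper (K := K), smul_smul, mul_comm (tayC K (m+1))]
    have hc : (((m + 1 : ℕ)) : K) * tayC K (m + 1) = - tayC K m := by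
      rw [mul_comm]; exact tayC_succ_mul m
    rw [hc, neg_smul, ← Function.iterate_succ_apply' (⇑D) (m + 1) y]
    abel

end Taylor

section TaylorMore

open Polynomial

variable {K A : Type*} [Field K] [CharZero K] [CommRing A] [Algebra K A] (D : Derivation K A A)

lemma tayE_two (y : A) :
    tayE D y 2 = Polynomial.C y - Polynomial.C (D y) * Polynomial.X := by
  rw [tayE, Finset.sum_range_succ, Finset.sum_range_one, tayC_zero, tayC_one,
    Function.iterate_one, Function.iterate_zero]
  simp [sub_eq_add_neg]

lemma tayE_split (y : A) (t : ℕ) :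
    tayE D y (t + 2) = tayE D y 2
      + ∑ i ∈ Finset.range t,
          tayC K (i + 2) • (Polynomial.C ((⇑D)^[i + 2] y) * Polynomial.X ^ (i + 2)) := by
  induction t with
  | zero => rw [Finset.range_zero, Finset.sum_empty, add_zero]
  | succ t ih =>
    rw [show t + 1 + 2 = (t + 2) + 1 from by omega, tayE, Finset.sum_range_succ, ← tayE, ih,
      Finset.sum_range_succ, show t + 2 = t + 2 from rfl]
    rw [add_assoc]

end TaylorMore


section Main

open MvPolynomial

variable (K : Type*) [Field K] [CharZero K] (n : ℕ) (f : Polynomial K)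

local notation "R" => MvPolynomial (Fin 3) K
local notation "B" => R ⧸ DanielewskiIdeal K n f
local notation "mkq" => Ideal.Quotient.mk (DanielewskiIdeal K n f)

lemma dR_iter_X1 (i : ℕ) :
    (⇑(dR K n f))^[i + 1] (MvPolynomial.X 1)
      = MvPolynomial.X 0 ^ (n * i)
        * Polynomial.aeval (MvPolynomial.X 2) (Polynomial.derivative^[i + 1] f) := by
  induction i with
  | zero =>
    rw [Function.iterate_one, dR_X1, Function.iterate_one]
    rw [Nat.mul_zero, pow_zero, one_mul]
  | succ i ih =>
    rw [show i + 1 + 1 = (i + 1) + 1 from rfl, Function.iterate_succ_apply', ih,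
      Derivation.leibniz, dR_X0_pow, smul_zero, add_zero, dR_aeval, smul_eq_mul,
      ← Function.iterate_succ_apply' Polynomial.derivative]
    rw [show n * (i + 1) = n * i + n from by ring, pow_add]
    ring

lemma DB_iter_X1 (i : ℕ) :
    (⇑(DB K n f))^[i + 1] (mkq (MvPolynomial.X 1))
      = mkq (MvPolynomial.X 0 ^ (n * i)
          * Polynomial.aeval (MvPolynomial.X 2) (Polynomial.derivative^[i + 1] f)) := by
  rw [DB_iter, dR_iter_X1]

lemma mem_HD_of_ker (j : ℕ) (w : Polynomial B)
    (hw : deltaD (DB K n f) (Polynomial.X ^ j) w = 0) :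
    w ∈ HDStar K (Polynomial B) :=
  Algebra.subset_adjoin
    ⟨deltaD (DB K n f) (Polynomial.X ^ j), isLND_deltaD _ (dnil_DB K n f) j,
      ⟨Polynomial.X, deltaD_X _ _⟩, hw⟩

lemma C_mem_HD (b : B) : Polynomial.C b ∈ HDStar K (Polynomial B) :=
  Algebra.subset_adjoin ⟨derK, isLND_derK, ⟨Polynomial.X, derK_X⟩, derK_C b⟩

lemma DB_mk_X0_pow : DB K n f (mkq (MvPolynomial.X 0 ^ n)) = 0 := by
  rw [DB_mk, dR_X0_pow, map_zero]

lemma xnX_mem (j : ℕ) :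
    Polynomial.C (mkq (MvPolynomial.X 0 ^ n)) * Polynomial.X ^ (j + 1)
      ∈ HDStar K (Polynomial B) := by
  set a : B := mkq (MvPolynomial.X 0 ^ n) with ha
  set w : Polynomial B := Polynomial.C (mkq (MvPolynomial.X 2))
      - (((j + 1 : ℕ) : K))⁻¹ • (Polynomial.C a * Polynomial.X ^ (j + 1)) with hwdef
  have hδa : deltaD (DB K n f) (Polynomial.X ^ j) (Polynomial.C a * Polynomial.X ^ (j + 1))
      = (((j + 1 : ℕ) : K)) • (Polynomial.C a * Polynomial.X ^ j) := by
    rw [deltaD_CXpow, ha, DB_mk_X0_pow, Polynomial.C_0, zero_mul, mul_zero, zero_add,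
      Nat.add_sub_cancel, cast_mul_helper (K := K)]
  have hj : (((j + 1 : ℕ) : K)) ≠ 0 := Nat.cast_ne_zero.mpr (Nat.succ_ne_zero j)
  have hw : deltaD (DB K n f) (Polynomial.X ^ j) w = 0 := by
    rw [hwdef, map_sub, Derivation.map_smul, hδa, deltaD_C, DB_mk, dR_X2, smul_smul,
      inv_mul_cancel₀ hj, one_smul]
    rw [mul_comm, sub_self]
  have hkey : Polynomial.C a * Polynomial.X ^ (j + 1)
      = (((j + 1 : ℕ) : K)) • (Polynomial.C (mkq (MvPolynomial.X 2)) - w) := by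
    rw [hwdef, sub_sub_cancel, smul_smul, mul_inv_cancel₀ hj, one_smul]
  rw [hkey]
  exact Subalgebra.smul_mem _
    (Subalgebra.sub_mem _ (C_mem_HD K n f _) (mem_HD_of_ker K n f j w hw)) _

lemma CF'X_mem :
    Polynomial.C (mkq (Polynomial.aeval (MvPolynomial.X 2) (Polynomial.derivative f)))
        * Polynomial.X ∈ HDStar K (Polynomial B) := by
  set y : B := mkq (MvPolynomial.X 1) with hy
  have hDBy : DB K n f y = mkq (Polynomial.aeval (MvPolynomial.X 2) (Polynomial.derivative f)) := by
    rw [hy, DB_mk, dR_X1]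
  obtain ⟨k, hk⟩ := dnil_DB K n f y
  have hnil : (⇑(DB K n f))^[(k + 1) + 1] y = 0 := iterD_nil_le _ hk (by omega)
  have hTEL : deltaD (DB K n f) (Polynomial.X ^ 0) (tayE (DB K n f) y ((k + 1) + 1)) = 0 := by
    rw [deltaD_tayE, hnil, Polynomial.C_0, zero_mul, smul_zero]
  have hE_mem : tayE (DB K n f) y (k + 2) ∈ HDStar K (Polynomial B) :=
    mem_HD_of_ker K n f 0 _ hTEL
  have htail : ∀ i ∈ Finset.range k,
      tayC K (i + 2) • (Polynomial.C ((⇑(DB K n f))^[i + 2] y) * Polynomial.X ^ (i + 2))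
        ∈ HDStar K (Polynomial B) := by
    intro i _
    have hform := DB_iter_X1 K n f (i + 1)
    rw [show (i + 1) + 1 = i + 2 from rfl] at hform
    have hsplit2 : Polynomial.C ((⇑(DB K n f))^[i + 2] y) * Polynomial.X ^ (i + 2)
        = Polynomial.C (mkq (MvPolynomial.X 0 ^ (n * i)
              * Polynomial.aeval (MvPolynomial.X 2) (Polynomial.derivative^[i + 2] f)))
          * (Polynomial.C (mkq (MvPolynomial.X 0 ^ n)) * Polynomial.X ^ (i + 2)) := by
      rw [← hy] at hform
      rw [hform, show n * (i + 1) = n * i + n from by ring, pow_add]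
      simp only [map_mul]
      ring
    rw [hsplit2]
    exact Subalgebra.smul_mem _
      (mul_mem (C_mem_HD K n f _) (xnX_mem K n f (i + 1))) _
  have hsum_mem : ∑ i ∈ Finset.range k,
      tayC K (i + 2) • (Polynomial.C ((⇑(DB K n f))^[i + 2] y) * Polynomial.X ^ (i + 2))
        ∈ HDStar K (Polynomial B) := Subalgebra.sum_mem _ htail
  have hsplit := tayE_split (DB K n f) y k
  have htwo := tayE_two (DB K n f) y
  have hfinal : Polynomial.C (DB K n f y) * Polynomial.X
      = Polynomial.C y
        + (∑ i ∈ Finset.range k,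
            tayC K (i + 2) • (Polynomial.C ((⇑(DB K n f))^[i + 2] y) * Polynomial.X ^ (i + 2)))
        - tayE (DB K n f) y (k + 2) := by
    rw [hsplit, htwo]; ring
  rw [← hDBy, hfinal]
  exact Subalgebra.sub_mem _
    (Subalgebra.add_mem _ (C_mem_HD K n f _) hsum_mem) hE_mem

end Main

section Final

open MvPolynomial

variable (K : Type*) [Field K] [CharZero K] (n : ℕ) (f : Polynomial K)

local notation "R" => MvPolynomial (Fin 3) K
local notation "B" => R ⧸ DanielewskiIdeal K n f
local notation "mkq" => Ideal.Quotient.mk (DanielewskiIdeal K n f)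

lemma xnX_mem_one :
    Polynomial.C (mkq (MvPolynomial.X 0 ^ n)) * Polynomial.X ∈ HDStar K (Polynomial B) := by
  simpa using xnX_mem K n f 0

lemma X_mem (hsq : Squarefree f) :
    (Polynomial.X : Polynomial B) ∈ HDStar K (Polynomial B) := by
  have hsep : f.Separable := PerfectField.separable_iff_squarefree.mpr hsq
  obtain ⟨a, b, hab⟩ := hsep
  have h1 : mkq (Polynomial.aeval (MvPolynomial.X 2) a)
        * mkq (Polynomial.aeval (MvPolynomial.X 2) f)
      + mkq (Polynomial.aeval (MvPolynomial.X 2) b)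
        * mkq (Polynomial.aeval (MvPolynomial.X 2) (Polynomial.derivative f)) = 1 := by
    have := congrArg
      (fun t => mkq (Polynomial.aeval (MvPolynomial.X 2) t)) hab
    simpa using this
  have hX : (Polynomial.X : Polynomial B)
      = Polynomial.C (mkq (Polynomial.aeval (MvPolynomial.X 2) a)
            * mkq (Polynomial.aeval (MvPolynomial.X 2) f)
          + mkq (Polynomial.aeval (MvPolynomial.X 2) b)
            * mkq (Polynomial.aeval (MvPolynomial.X 2) (Polynomial.derivative f)))
        * Polynomial.X := by
    rw [h1, Polynomial.C_1, one_mul]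
  rw [hX, mk_aeval_f, map_add, map_mul, map_mul, map_mul, add_mul]
  refine add_mem ?_ ?_
  · have h2 : Polynomial.C (mkq (Polynomial.aeval (MvPolynomial.X 2) a))
        * (Polynomial.C (mkq (MvPolynomial.X 0 ^ n)) * Polynomial.C (mkq (MvPolynomial.X 1)))
        * Polynomial.X
        = (Polynomial.C (mkq (Polynomial.aeval (MvPolynomial.X 2) a))
            * Polynomial.C (mkq (MvPolynomial.X 1)))
          * (Polynomial.C (mkq (MvPolynomial.X 0 ^ n)) * Polynomial.X) := by ring
    rw [h2]
    exact mul_mem (mul_mem (C_mem_HD K n f _) (C_mem_HD K n f _)) (xnX_mem_one K n f)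
  · rw [mul_assoc]
    exact mul_mem (C_mem_HD K n f _) (CF'X_mem K n f)

lemma part2 (hsq : Squarefree f) : HDStar K (Polynomial B) = ⊤ := by
  rw [eq_top_iff]
  rintro p -
  induction p using Polynomial.induction_on with
  | C b => exact C_mem_HD K n f b
  | add p q hp hq => exact add_mem hp hq
  | monomial m a ih =>
    rw [pow_succ, ← mul_assoc]
    exact mul_mem ih (X_mem K n f hsq)

end Final


set_option synthInstance.maxHeartbeats 1000000 in
theorem stmt17 (K : Type*) [Field K] [IsAlgClosed K] [CharZero K]
    (n : ℕ) (hn : 1 ≤ n) (f : Polynomial K) (hf : 0 < f.natDegree) (hsq : Squarefree f) :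
    Ideal.span {b : MvPolynomial (Fin 3) K ⧸ DanielewskiIdeal K n f |
      ∃ D : Derivation K (MvPolynomial (Fin 3) K ⧸ DanielewskiIdeal K n f)
          (MvPolynomial (Fin 3) K ⧸ DanielewskiIdeal K n f),
        IsLND D ∧ b ∈ Set.range D} = ⊤ ∧
    HDStar K (Polynomial (MvPolynomial (Fin 3) K ⧸ DanielewskiIdeal K n f)) = ⊤ :=
  ⟨part1 K n f hsq, part2 K n f hsq⟩
end
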